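/- arXiv:2002.09076 — 5 statements merged into one kernel-verified Lean document; each statement's English description precedes it below -/
import Mathlib

section
/- Let Γ be a countable group acting on a GCA A with countable joins, and let μ and ν be finite measures on A (i.e., homomorphisms A → ℝ⁺). Then μ and ν agree on every Γ-invariant element of A if and only if μ and ν are equidecomposable, i.e., there exist homomorphisms (μ_γ)_{γ∈Γ} from A to ℝ⁺ with μ = ∑_γ μ_γ and ν = ∑_γ γμ_γ (pointwise convergent sums). -/
/-- A generalized cardinal algebra (Tarski): a set with a partial binary `add`,
a constant `zero`, and a partial `ω`-ary `sum`, satisfying Tarski's axioms.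
Partiality is encoded by definedness predicates `addDef` and `sumDef`. -/
structure GCA (α : Type*) where
  zero : α
  addDef : α → α → Prop
  add : α → α → α
  sumDef : (ℕ → α) → Prop
  sum : (ℕ → α) → α
  addDef_zero_right : ∀ a, addDef a zero
  addDef_zero_left : ∀ a, addDef zero a
  add_zero : ∀ a, add a zero = a
  zero_add : ∀ a, add zero a = a
  sum_tail : ∀ s, sumDef s →
    sumDef (fun n => s (n + 1)) ∧ addDef (s 0) (sum (fun n => s (n + 1))) ∧
      sum s = add (s 0) (sum (fun n => s (n + 1)))
  sum_add : ∀ s t : ℕ → α, (∀ n, addDef (s n) (t n)) →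
    sumDef (fun n => add (s n) (t n)) →
      sumDef s ∧ sumDef t ∧ addDef (sum s) (sum t) ∧
        sum (fun n => add (s n) (t n)) = add (sum s) (sum t)
  refinement : ∀ x y (c : ℕ → α), addDef x y → sumDef c → add x y = sum c →
    ∃ s t : ℕ → α, sumDef s ∧ sumDef t ∧ sum s = x ∧ sum t = y ∧
      ∀ n, addDef (s n) (t n) ∧ add (s n) (t n) = c n
  remainder : ∀ s t : ℕ → α, (∀ n, addDef (t n) (s (n + 1)) ∧ s n = add (t n) (s (n + 1))) →
    ∃ c, ∀ n, sumDef (fun i => t (i + n)) ∧ addDef c (sum (fun i => t (i + n))) ∧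
      s n = add c (sum (fun i => t (i + n)))

/-- The order induced by a GCA: `a ≤ b` iff `a + c = b` for some `c`. -/
def GCA.le {α : Type*} (A : GCA α) (a b : α) : Prop :=
  ∃ c, A.addDef a c ∧ A.add a c = b

open scoped NNReal

/-- A finite measure on a GCA `A`: a homomorphism `A → ℝ⁺`, where countable
sums in `ℝ⁺ = ℝ≥0` are convergent series. -/
def GCA.IsMeasure {α : Type*} (A : GCA α) (μ : α → ℝ≥0) : Prop :=
  μ A.zero = 0 ∧
  (∀ a b, A.addDef a b → μ (A.add a b) = μ a + μ b) ∧
  (∀ s : ℕ → α, A.sumDef s → HasSum (fun n => μ (s n)) (μ (A.sum s)))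

/-- An action of a group `Γ` on a GCA `A`: a group action such that each map
`a ↦ γ a` is a GCA homomorphism. -/
def GCA.IsAction {α Γ : Type*} [Group Γ] (A : GCA α) (act : Γ → α → α) : Prop :=
  (∀ a, act 1 a = a) ∧
  (∀ γ δ a, act γ (act δ a) = act (γ * δ) a) ∧
  (∀ γ : Γ,
    act γ A.zero = A.zero ∧
    (∀ a b, A.addDef a b →
      A.addDef (act γ a) (act γ b) ∧ act γ (A.add a b) = A.add (act γ a) (act γ b)) ∧
    (∀ s : ℕ → α, A.sumDef s →
      A.sumDef (fun n => act γ (s n)) ∧ act γ (A.sum s) = A.sum (fun n => act γ (s n))))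

/-- `a` and `b` are equidecomposable with respect to an action of `Γ` on a GCA
`A` if there is a countable family `(c n)` with labels `(g n)` in `Γ` such
that `a = ∑ₙ c n` and `b = ∑ₙ (g n) • (c n)` (this is the statement
`a = ∑_γ a_γ`, `b = ∑_γ γ a_γ`, with each `γ` allowed to label several
pieces). -/
def GCA.Equidecomposable {α Γ : Type*} [Group Γ] (A : GCA α) (act : Γ → α → α)
    (a b : α) : Prop :=
  ∃ (c : ℕ → α) (g : ℕ → Γ),
    A.sumDef c ∧ A.sum c = a ∧
    A.sumDef (fun n => act (g n) (c n)) ∧ A.sum (fun n => act (g n) (c n)) = b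

/-- `m` is the meet (greatest lower bound) of `a` and `b` in the order of the
GCA `A`. -/
def GCA.IsMeet {α : Type*} (A : GCA α) (a b m : α) : Prop :=
  A.le m a ∧ A.le m b ∧ ∀ x, A.le x a → A.le x b → A.le x m

/-!
Agreement on invariant elements follows at once from an equidecomposition, since an invariant `a`
has `cₙ (gₙ⁻¹ a) = cₙ a`. Conversely, enumerate `Γ` as `g₀, g₁, …` with every element occurring
infinitely often and exhaust `μ` and `ν` greedily: step `k` transfers the largest measure `c` with
`c ≤ μₖ` and `gₖ • c ≤ νₖ`, namely the infimum of `μₖ` and `νₖ ∘ gₖ` in the lattice of measures.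
The residues `p` and `q` still agree on invariant elements, and the infimum of `p` with any
translate of `q` vanishes. Splitting an element `a` over and over into a part of small `p`-measure
and a part whose `gₖ`-translate has small `q`-measure, the remainder axiom leaves `r ≤ a` with
`p a ≤ p r + ε` and `q (γ r) = 0` for all `γ`. The join of the orbit of `r` is invariant, so
`p r ≤ q (⋁ γ r) ≤ ∑ q (γ r) = 0` by countable subadditivity of measures over joins. Hence
`p = 0`, and then `q = 0` by the same orbit argument.
-/

namespace GCA

variable {α : Type*} {A : GCA α}

def IsSum (A : GCA α) (a b c : α) : Prop :=
  A.addDef a b ∧ A.add a b = c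

section Arithmetic

variable {a b c d x y : α}

theorem isSum_zero_right (a : α) : A.IsSum a A.zero a :=
  ⟨A.addDef_zero_right a, A.add_zero a⟩

theorem isSum_zero_left (a : α) : A.IsSum A.zero a a :=
  ⟨A.addDef_zero_left a, A.zero_add a⟩

theorem IsSum.unique (h : A.IsSum a b c) (h' : A.IsSum a b d) : c = d :=
  h.2.symm.trans h'.2

theorem IsSum.le_left (h : A.IsSum a b c) : A.le a c := ⟨b, h⟩

theorem sum_tail_isSum {s : ℕ → α} (hs : A.sumDef s) :
    A.sumDef (fun n => s (n + 1)) ∧ A.IsSum (s 0) (A.sum fun n => s (n + 1)) (A.sum s) :=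
  let ⟨h₁, h₂, h₃⟩ := A.sum_tail s hs
  ⟨h₁, h₂, h₃.symm⟩

theorem sum_isSum_of_forall_isSum {s t u : ℕ → α} (h : ∀ n, A.IsSum (s n) (t n) (u n))
    (hu : A.sumDef u) : A.sumDef s ∧ A.sumDef t ∧ A.IsSum (A.sum s) (A.sum t) (A.sum u) := by
  obtain rfl : u = fun n => A.add (s n) (t n) := funext fun n => (h n).2.symm
  obtain ⟨hs, ht, hst, heq⟩ := A.sum_add s t (fun n => (h n).1) hu
  exact ⟨hs, ht, hst, heq.symm⟩

theorem exists_remainder {s t : ℕ → α} (h : ∀ n, A.IsSum (t n) (s (n + 1)) (s n)) :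
    ∃ r, ∀ n, A.sumDef (fun i => t (i + n)) ∧ A.IsSum r (A.sum fun i => t (i + n)) (s n) := by
  obtain ⟨r, hr⟩ := A.remainder s t fun n => ⟨(h n).1, (h n).2.symm⟩
  exact ⟨r, fun n => ⟨(hr n).1, (hr n).2.1, (hr n).2.2.symm⟩⟩

def seq (A : GCA α) (l : List α) (n : ℕ) : α :=
  l.getD n A.zero

theorem seq_eq_zero {l : List α} {n : ℕ} (hn : l.length ≤ n) : A.seq l n = A.zero :=
  List.getD_eq_default _ _ hn

theorem sum_cons_seq {a : α} {l : List α} (h : A.sumDef (A.seq (a :: l))) :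
    A.sumDef (A.seq l) ∧ A.IsSum a (A.sum (A.seq l)) (A.sum (A.seq (a :: l))) :=
  sum_tail_isSum h

theorem sum_const_zero : A.sumDef (fun _ => A.zero) ∧ A.sum (fun _ => A.zero) = A.zero := by
  obtain ⟨r, hr⟩ := exists_remainder (A := A) (s := fun _ => A.zero) (t := fun _ => A.zero)
    fun _ => isSum_zero_left _
  obtain ⟨hZ, hrZ⟩ := hr 0
  refine ⟨hZ, ?_⟩
  set Z := A.sum fun _ : ℕ => A.zero
  have hZZ : A.IsSum Z Z Z := (sum_isSum_of_forall_isSum (fun _ => isSum_zero_left _) hZ).2.2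
  -- `r, Z, 0, 0, …` sums to `r + Z = 0`, and splitting it as `0, Z, 0, …` plus `r, 0, …` gives `Z`
  obtain ⟨_, hrZ'⟩ := exists_remainder (s := A.seq [A.zero, Z]) (t := A.seq [r, Z]) fun n =>
    match n with
    | 0 => hrZ
    | 1 => isSum_zero_right Z
    | _ + 2 => isSum_zero_left _
  have hT : A.sumDef (A.seq [r, Z]) := (hrZ' 0).1
  have hsplit : ∀ n, A.IsSum (A.seq [A.zero, Z] n) (A.seq [r] n) (A.seq [r, Z] n)
    | 0 => isSum_zero_left r
    | 1 => isSum_zero_right Z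
    | _ + 2 => isSum_zero_left _
  obtain ⟨h0Z, hr0, hsum⟩ := sum_isSum_of_forall_isSum hsplit hT
  obtain ⟨hZ0, h1⟩ := sum_cons_seq hT
  obtain ⟨-, h2⟩ := sum_cons_seq hZ0
  obtain ⟨-, h3⟩ := sum_cons_seq h0Z
  obtain ⟨-, h4⟩ := sum_cons_seq hr0
  have hnil : A.sum (A.seq []) = Z := rfl
  rw [hnil] at h2 h4
  rw [h2.unique hZZ] at h1 h3
  rw [h3.unique (isSum_zero_left Z), h4.unique hrZ] at hsum
  exact (hsum.unique (isSum_zero_right Z)).symm.trans (h1.unique hrZ)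

theorem sum_seq_nil : A.sum (A.seq []) = A.zero := sum_const_zero.2

def ListSum (A : GCA α) : List α → α → Prop
  | [], x => x = A.zero
  | a :: l, x => ∃ y, A.ListSum l y ∧ A.IsSum a y x

@[simp] theorem listSum_nil : A.ListSum [] x ↔ x = A.zero := Iff.rfl

@[simp] theorem listSum_cons {l : List α} :
    A.ListSum (a :: l) x ↔ ∃ y, A.ListSum l y ∧ A.IsSum a y x := Iff.rfl

@[simp] theorem listSum_singleton : A.ListSum [a] x ↔ x = a := by
  simp only [listSum_cons, listSum_nil, exists_eq_left]
  exact ⟨fun h => h.unique (isSum_zero_right a), fun h => h ▸ isSum_zero_right x⟩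

@[simp] theorem listSum_pair : A.ListSum [a, b] x ↔ A.IsSum a b x := by
  rw [listSum_cons]
  simp only [listSum_singleton, exists_eq_left]

theorem ListSum.unique {l : List α} (h : A.ListSum l x) (h' : A.ListSum l y) : x = y := by
  induction l generalizing x y with
  | nil => exact h.trans h'.symm
  | cons a l ih =>
    obtain ⟨u, hu, hx⟩ := h
    obtain ⟨v, hv, hy⟩ := h'
    exact hx.unique (ih hu hv ▸ hy)

theorem ListSum.le_of_cons {l : List α} (h : A.ListSum (a :: l) x) : A.le a x :=
  let ⟨_, _, hx⟩ := h
  hx.le_left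

theorem sum_eq_of_chain {s t : ℕ → α} (N : ℕ) (h : ∀ n, A.IsSum (t n) (s (n + 1)) (s n))
    (ht : ∀ n, N ≤ n → t n = A.zero) (hs : s N = A.zero) : A.sumDef t ∧ A.sum t = s 0 := by
  obtain ⟨r, hr⟩ := exists_remainder h
  have htail : (fun i => t (i + N)) = fun _ => A.zero := funext fun i => ht _ (by omega)
  have hr0 : r = A.zero := by
    have := (hr N).2
    rw [htail, sum_const_zero.2, hs] at this
    exact (this.unique (isSum_zero_right r)).symm
  obtain ⟨hdef, hsum⟩ := hr 0
  simp only [Nat.add_zero, hr0] at hdef hsum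
  exact ⟨hdef, hsum.unique (isSum_zero_left _) |>.symm⟩

theorem ListSum.exists_chain {l : List α} (h : A.ListSum l x) :
    ∃ s : ℕ → α, s 0 = x ∧ s l.length = A.zero ∧ ∀ n, A.IsSum (A.seq l n) (s (n + 1)) (s n) := by
  induction l generalizing x with
  | nil => exact ⟨fun _ => A.zero, h.symm, rfl, fun _ => isSum_zero_left _⟩
  | cons a l ih =>
    obtain ⟨y, hy, hx⟩ := h
    obtain ⟨s, hs0, hsl, hs⟩ := ih hy
    refine ⟨fun n => Nat.casesOn n x s, rfl, hsl, fun n => ?_⟩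
    cases n with
    | zero => show A.IsSum a (s 0) x; rwa [hs0]
    | succ n => exact hs n

theorem ListSum.sum_seq {l : List α} (h : A.ListSum l x) :
    A.sumDef (A.seq l) ∧ A.sum (A.seq l) = x := by
  obtain ⟨s, hs0, hsl, hs⟩ := h.exists_chain
  exact hs0 ▸ sum_eq_of_chain l.length hs (fun _ => seq_eq_zero) hsl

theorem listSum_sum_seq {l : List α} (h : A.sumDef (A.seq l)) : A.ListSum l (A.sum (A.seq l)) := by
  induction l with
  | nil => exact sum_seq_nil
  | cons a l ih =>
    obtain ⟨hl, hsum⟩ := sum_cons_seq h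
    exact ⟨_, ih hl, hsum⟩

theorem ListSum.exists_of_forall_isSum {l l₁ l₂ : List α} (hl : A.ListSum l x)
    (h : ∀ n, A.IsSum (A.seq l₁ n) (A.seq l₂ n) (A.seq l n)) :
    ∃ y z, A.ListSum l₁ y ∧ A.ListSum l₂ z ∧ A.IsSum y z x := by
  obtain ⟨hdef, rfl⟩ := hl.sum_seq
  obtain ⟨h₁, h₂, hsum⟩ := sum_isSum_of_forall_isSum h hdef
  exact ⟨_, _, listSum_sum_seq h₁, listSum_sum_seq h₂, hsum⟩

theorem IsSum.symm (h : A.IsSum a b c) : A.IsSum b a c := by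
  obtain ⟨y, z, hy, hz, hyz⟩ := (listSum_pair.2 h).exists_of_forall_isSum
    (l₁ := [A.zero, b]) (l₂ := [a]) fun n =>
    match n with
    | 0 => isSum_zero_left a
    | 1 => isSum_zero_right b
    | _ + 2 => isSum_zero_left _
  rw [listSum_pair] at hy
  rw [listSum_singleton] at hz
  rwa [hy.unique (isSum_zero_left b), hz] at hyz

theorem IsSum.le_right (h : A.IsSum a b c) : A.le b c := h.symm.le_left

theorem IsSum.assoc (hab : A.IsSum a b c) (h : A.IsSum c d x) :
    ∃ y, A.IsSum b d y ∧ A.IsSum a y x := by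
  obtain ⟨y, z, hy, hz, hyz⟩ := (listSum_pair.2 h).exists_of_forall_isSum
    (l₁ := [a]) (l₂ := [b, d]) fun n =>
    match n with
    | 0 => hab
    | 1 => isSum_zero_left d
    | _ + 2 => isSum_zero_left _
  rw [listSum_singleton] at hy
  exact ⟨z, listSum_pair.1 hz, hy ▸ hyz⟩

theorem IsSum.assoc' (hbd : A.IsSum b d y) (h : A.IsSum a y x) :
    ∃ c, A.IsSum a b c ∧ A.IsSum c d x := by
  obtain ⟨c, hba, hdc⟩ := hbd.symm.assoc h.symm
  exact ⟨c, hba.symm, hdc.symm⟩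

theorem IsSum.left_comm (hbd : A.IsSum b d y) (h : A.IsSum a y x) :
    ∃ z, A.IsSum a d z ∧ A.IsSum b z x := by
  obtain ⟨c, hab, hcd⟩ := hbd.assoc' h
  exact hab.symm.assoc hcd

theorem ListSum.perm {l l' : List α} (h : A.ListSum l x) (hl : l.Perm l') : A.ListSum l' x := by
  induction hl generalizing x with
  | nil => exact h
  | cons a _ ih =>
    obtain ⟨y, hy, hx⟩ := h
    exact ⟨y, ih hy, hx⟩
  | swap a b l =>
    obtain ⟨y, ⟨u, hu, hy⟩, hx⟩ := h
    obtain ⟨z, hz, hx'⟩ := hy.left_comm hx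
    exact ⟨z, ⟨u, hu, hz⟩, hx'⟩
  | trans _ _ ih₁ ih₂ => exact ih₂ (ih₁ h)

theorem ListSum.perm_of_coe_eq {l l' : List α} (h : A.ListSum l x)
    (hl : (l : Multiset α) = l') : A.ListSum l' x :=
  h.perm (Multiset.coe_eq_coe.1 hl)

theorem listSum_append {l₁ l₂ : List α} :
    A.ListSum (l₁ ++ l₂) x ↔ ∃ y, A.ListSum l₁ y ∧ A.ListSum (y :: l₂) x := by
  induction l₁ generalizing x with
  | nil =>
    simp only [List.nil_append, listSum_nil, listSum_cons, exists_eq_left]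
    exact ⟨fun h => ⟨x, h, isSum_zero_left x⟩, fun ⟨y, hy, h⟩ => h.unique (isSum_zero_left y) ▸ hy⟩
  | cons a l₁ ih =>
    simp only [List.cons_append, listSum_cons, ih]
    constructor
    · rintro ⟨w, ⟨y, hy, z, hz, hyz⟩, hw⟩
      obtain ⟨u, hau, hux⟩ := hyz.assoc' hw
      exact ⟨u, ⟨y, hy, hau⟩, z, hz, hux⟩
    · rintro ⟨u, ⟨y, hy, hau⟩, z, hz, hux⟩
      obtain ⟨w, hyz, hw⟩ := hau.assoc hux
      exact ⟨w, ⟨y, hy, z, hz, hyz⟩, hw⟩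

theorem listSum_flatten {L : List (List α)} {l : List α} (h : List.Forall₂ A.ListSum L l) :
    A.ListSum L.flatten x ↔ A.ListSum l x := by
  induction h generalizing x with
  | nil => exact Iff.rfl
  | @cons l₀ a L l ha _ ih =>
    simp only [List.flatten_cons, listSum_append, listSum_cons, ih]
    exact ⟨fun ⟨_, hy, h⟩ => ha.unique hy ▸ h, fun h => ⟨a, ha, h⟩⟩

theorem le.trans (hab : A.le a b) (hbc : A.le b c) : A.le a c := by
  obtain ⟨d, hd : A.IsSum a d b⟩ := hab
  obtain ⟨e, he : A.IsSum b e c⟩ := hbc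
  obtain ⟨y, -, hy⟩ := hd.assoc he
  exact hy.le_left

/-- From `a = e + a` the remainder axiom gives `a = r + ∑ₙ e`, and `∑ₙ e` absorbs every part
of `e`. -/
theorem le.antisymm (hab : A.le a b) (hba : A.le b a) : a = b := by
  obtain ⟨c, hc : A.IsSum a c b⟩ := hab
  obtain ⟨d, hd : A.IsSum b d a⟩ := hba
  obtain ⟨e, hcd, hae⟩ := hc.assoc hd
  obtain ⟨r, hr⟩ := exists_remainder (s := fun _ => a) (t := fun _ => e) fun _ => hae.symm
  obtain ⟨hE, hrE⟩ := hr 0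
  obtain ⟨hC, -, hCD⟩ := sum_isSum_of_forall_isSum (u := fun _ => e) (fun _ => hcd) hE
  have hcC : A.IsSum c (A.sum fun _ => c) (A.sum fun _ => c) := (sum_tail_isSum hC).2
  obtain ⟨E, hCD', hcE⟩ := hcC.assoc hCD
  rw [← hCD.unique hCD'] at hcE
  obtain ⟨y, hEc, hrb⟩ := hrE.assoc hc
  rw [hEc.symm.unique hcE] at hrb
  exact hrE.unique hrb

theorem eq_zero_of_isSum_zero (h : A.IsSum a b A.zero) : a = A.zero :=
  h.le_left.antisymm (isSum_zero_left a).le_left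

theorem IsSum.refine {z : α} (hab : A.IsSum a b z) (hxy : A.IsSum x y z) :
    ∃ a₁ a₂ b₁ b₂, A.IsSum a₁ a₂ a ∧ A.IsSum b₁ b₂ b ∧ A.IsSum a₁ b₁ x ∧ A.IsSum a₂ b₂ y := by
  obtain ⟨hdef, hsum⟩ := (listSum_pair.2 hab).sum_seq
  obtain ⟨s, t, hs, ht, rfl, rfl, hst⟩ := A.refinement x y _ hxy.1 hdef (hxy.2.trans hsum.symm)
  have hst' (n : ℕ) : A.IsSum (s n) (t n) (A.seq [a, b] n) := ⟨(hst n).1, (hst n).2⟩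
  have hseq {u : ℕ → α} (hu : ∀ n, u (n + 2) = A.zero) : u = A.seq [u 0, u 1] :=
    funext fun n =>
    match n with
    | 0 => rfl
    | 1 => rfl
    | n + 2 => hu n
  have hs2 : s = A.seq [s 0, s 1] := hseq fun n => eq_zero_of_isSum_zero (hst' (n + 2))
  have ht2 : t = A.seq [t 0, t 1] := hseq fun n => eq_zero_of_isSum_zero (hst' (n + 2)).symm
  refine ⟨s 0, t 0, s 1, t 1, hst' 0, hst' 1, ?_, ?_⟩
  · rw [hs2] at hs ⊢
    exact listSum_pair.1 (listSum_sum_seq hs)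
  · rw [ht2] at ht ⊢
    exact listSum_pair.1 (listSum_sum_seq ht)

end Arithmetic

namespace IsMeasure

variable {φ ψ : α → ℝ≥0} {a b c x : α}

theorem map_zero (hφ : A.IsMeasure φ) : φ A.zero = 0 := hφ.1

theorem map_isSum (hφ : A.IsMeasure φ) (h : A.IsSum a b c) : φ c = φ a + φ b :=
  h.2 ▸ hφ.2.1 a b h.1

theorem hasSum (hφ : A.IsMeasure φ) {s : ℕ → α} (hs : A.sumDef s) :
    HasSum (fun n => φ (s n)) (φ (A.sum s)) :=
  hφ.2.2 s hs

theorem mono (hφ : A.IsMeasure φ) (h : A.le a b) : φ a ≤ φ b := by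
  obtain ⟨c, hc : A.IsSum a c b⟩ := h
  exact hφ.map_isSum hc ▸ le_self_add

theorem map_listSum (hφ : A.IsMeasure φ) {l : List α} (h : A.ListSum l x) :
    φ x = (l.map φ).sum := by
  induction l generalizing x with
  | nil => exact h ▸ hφ.map_zero
  | cons a l ih =>
    obtain ⟨y, hy, hx⟩ := h
    rw [hφ.map_isSum hx, ih hy, List.map_cons, List.sum_cons]

end IsMeasure

theorem isMeasure_of_hasSum {φ : α → ℝ≥0} (h0 : φ A.zero = 0)
    (hφ : ∀ s, A.sumDef s → HasSum (fun n => φ (s n)) (φ (A.sum s))) : A.IsMeasure φ := by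
  refine ⟨h0, fun a b hab => ?_, hφ⟩
  obtain ⟨hdef, hsum⟩ := (listSum_pair.2 (⟨hab, rfl⟩ : A.IsSum a b _)).sum_seq
  refine hsum ▸ (hφ _ hdef).unique ?_
  convert hasSum_sum_of_ne_finset_zero (L := SummationFilter.unconditional ℕ)
    (s := Finset.range 2) fun n hn => ?_
  · simp [Finset.sum_range_succ, seq]
  · rw [seq_eq_zero (by simp at hn; exact hn), h0]

namespace IsMeasure

variable {φ ψ : α → ℝ≥0}

theorem sub (hφ : A.IsMeasure φ) (hψ : A.IsMeasure ψ) (hle : ∀ x, ψ x ≤ φ x) :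
    A.IsMeasure fun x => φ x - ψ x := by
  refine isMeasure_of_hasSum (by simp [hφ.map_zero]) fun s hs => ?_
  rw [← NNReal.hasSum_coe]
  push_cast [hle]
  exact (NNReal.hasSum_coe.2 (hφ.hasSum hs)).sub (NNReal.hasSum_coe.2 (hψ.hasSum hs))

theorem tsum {c : ℕ → α → ℝ≥0} (hc : ∀ k, A.IsMeasure (c k))
    (hsum : ∀ x, Summable fun k => c k x) : A.IsMeasure fun x => ∑' k, c k x := by
  refine isMeasure_of_hasSum (by simp [fun k => (hc k).map_zero]) fun s hs => ?_
  rw [← ENNReal.hasSum_coe, ENNReal.summable.hasSum_iff]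
  simp_rw [ENNReal.coe_tsum (hsum _)]
  rw [ENNReal.tsum_comm]
  exact tsum_congr fun k => by rw [← ENNReal.coe_tsum ((hc k).hasSum hs).summable,
    ((hc k).hasSum hs).tsum_eq]

end IsMeasure

section Action

variable {Γ : Type*} [Group Γ] {act : Γ → α → α} {a b c : α}

namespace IsAction

theorem act_inv_act (hact : A.IsAction act) (γ : Γ) (x : α) : act γ⁻¹ (act γ x) = x := by
  rw [hact.2.1, inv_mul_cancel, hact.1]

theorem act_act_inv (hact : A.IsAction act) (γ : Γ) (x : α) : act γ (act γ⁻¹ x) = x := by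
  simpa using hact.act_inv_act γ⁻¹ x

theorem isSum (hact : A.IsAction act) (γ : Γ) (h : A.IsSum a b c) :
    A.IsSum (act γ a) (act γ b) (act γ c) := by
  obtain ⟨hdef, heq⟩ := (hact.2.2 γ).2.1 a b h.1
  exact ⟨hdef, h.2 ▸ heq.symm⟩

theorem le (hact : A.IsAction act) (γ : Γ) (h : A.le a b) : A.le (act γ a) (act γ b) :=
  let ⟨_, hc⟩ := h
  (hact.isSum γ hc).le_left

end IsAction

theorem IsMeasure.comp_act {φ : α → ℝ≥0} (hφ : A.IsMeasure φ) (hact : A.IsAction act) (γ : Γ) :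
    A.IsMeasure fun x => φ (act γ x) := by
  refine ⟨?_, fun a b hab => hφ.map_isSum (hact.isSum γ ⟨hab, rfl⟩), fun s hs => ?_⟩
  · show φ (act γ A.zero) = 0
    rw [(hact.2.2 γ).1, hφ.map_zero]
  · obtain ⟨hdef, heq⟩ := (hact.2.2 γ).2.2 s hs
    show HasSum (fun n => φ (act γ (s n))) (φ (act γ (A.sum s)))
    exact heq ▸ hφ.hasSum hdef

end Action

section Inf

variable {φ ψ φ' ψ' : α → ℝ≥0} {x : α}

/-- The infimum of `φ` and `ψ` in the lattice of measures. -/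
noncomputable def measureInf (A : GCA α) (φ ψ : α → ℝ≥0) (x : α) : ℝ≥0 :=
  ⨅ p : {p : α × α // A.IsSum p.1 p.2 x}, φ p.1.1 + ψ p.1.2

instance (x : α) : Nonempty {p : α × α // A.IsSum p.1 p.2 x} :=
  ⟨⟨(x, A.zero), isSum_zero_right x⟩⟩

theorem measureInf_le {b c : α} (h : A.IsSum b c x) : A.measureInf φ ψ x ≤ φ b + ψ c :=
  ciInf_le (OrderBot.bddBelow _) (⟨(b, c), h⟩ : {p : α × α // A.IsSum p.1 p.2 x})

theorem exists_lt_of_measureInf_lt {t : ℝ≥0} (h : A.measureInf φ ψ x < t) :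
    ∃ b c, A.IsSum b c x ∧ φ b + ψ c < t :=
  let ⟨⟨⟨b, c⟩, hbc⟩, hlt⟩ := exists_lt_of_ciInf_lt h
  ⟨b, c, hbc, hlt⟩

theorem le_measureInf {t : ℝ≥0} (h : ∀ b c, A.IsSum b c x → t ≤ φ b + ψ c) :
    t ≤ A.measureInf φ ψ x :=
  le_ciInf fun p => h _ _ p.2

theorem measureInf_le_left (hψ : A.IsMeasure ψ) (x : α) : A.measureInf φ ψ x ≤ φ x := by
  simpa [hψ.map_zero] using measureInf_le (A := A) (φ := φ) (ψ := ψ) (isSum_zero_right x)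

theorem measureInf_le_right (hφ : A.IsMeasure φ) (x : α) : A.measureInf φ ψ x ≤ ψ x := by
  simpa [hφ.map_zero] using measureInf_le (A := A) (φ := φ) (ψ := ψ) (isSum_zero_left x)

theorem measureInf_mono (hφ : ∀ x, φ x ≤ φ' x) (hψ : ∀ x, ψ x ≤ ψ' x) (x : α) :
    A.measureInf φ ψ x ≤ A.measureInf φ' ψ' x :=
  le_measureInf fun _ _ h => (measureInf_le h).trans (add_le_add (hφ _) (hψ _))

variable {s : ℕ → α}

theorem summable_measureInf (hφ : A.IsMeasure φ) (hψ : A.IsMeasure ψ) (hs : A.sumDef s) :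
    Summable fun n => A.measureInf φ ψ (s n) :=
  NNReal.summable_of_le (fun n => measureInf_le_left hψ (s n)) (hφ.hasSum hs).summable

theorem tsum_measureInf_le (hφ : A.IsMeasure φ) (hψ : A.IsMeasure ψ) (hs : A.sumDef s) :
    ∑' n, A.measureInf φ ψ (s n) ≤ A.measureInf φ ψ (A.sum s) := by
  refine le_measureInf fun b c hbc => ?_
  obtain ⟨p, q, hp, hq, rfl, rfl, hpq⟩ := A.refinement b c s hbc.1 hs hbc.2
  exact hasSum_le (fun n => measureInf_le ⟨(hpq n).1, (hpq n).2⟩)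
    (summable_measureInf hφ hψ hs).hasSum ((hφ.hasSum hp).add (hψ.hasSum hq))

theorem measureInf_sum_le_tsum (hφ : A.IsMeasure φ) (hψ : A.IsMeasure ψ) (hs : A.sumDef s) :
    A.measureInf φ ψ (A.sum s) ≤ ∑' n, A.measureInf φ ψ (s n) := by
  refine le_of_forall_pos_le_add fun ε hε => ?_
  obtain ⟨δ, hδ, d, hδd, hdε⟩ := NNReal.exists_pos_sum_of_countable hε.ne' ℕ
  have hnear (n : ℕ) : ∃ b c, A.IsSum b c (s n) ∧ φ b + ψ c < A.measureInf φ ψ (s n) + δ n :=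
    exists_lt_of_measureInf_lt (lt_add_of_pos_right _ (hδ n))
  choose b c hbc hlt using hnear
  obtain ⟨hb, hc, hsum⟩ := sum_isSum_of_forall_isSum hbc hs
  calc A.measureInf φ ψ (A.sum s) ≤ φ (A.sum b) + ψ (A.sum c) := measureInf_le hsum
    _ ≤ ∑' n, A.measureInf φ ψ (s n) + d :=
      hasSum_le (fun n => (hlt n).le) ((hφ.hasSum hb).add (hψ.hasSum hc))
        ((summable_measureInf hφ hψ hs).hasSum.add hδd)
    _ ≤ ∑' n, A.measureInf φ ψ (s n) + ε := by gcongr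

theorem IsMeasure.measureInf (hφ : A.IsMeasure φ) (hψ : A.IsMeasure ψ) :
    A.IsMeasure (A.measureInf φ ψ) :=
  isMeasure_of_hasSum (le_antisymm (hφ.map_zero ▸ measureInf_le_left hψ _) bot_le) fun _ hs =>
    (tsum_measureInf_le hφ hψ hs).antisymm (measureInf_sum_le_tsum hφ hψ hs) ▸
      (summable_measureInf hφ hψ hs).hasSum

end Inf

section Join

variable {s : ℕ → α} {j : α}

def IsJoin (A : GCA α) (s : ℕ → α) (j : α) : Prop :=
  (∀ n, A.le (s n) j) ∧ ∀ x, (∀ n, A.le (s n) x) → A.le j x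

theorem exists_seq_of_step {β : Type*} {P : ℕ → β → Prop} {R : ℕ → β → β → Prop} {b : β}
    (h0 : P 0 b) (h : ∀ n b, P n b → ∃ b', P (n + 1) b' ∧ R n b b') :
    ∃ f : ℕ → β, f 0 = b ∧ ∀ n, P n (f n) ∧ R n (f n) (f (n + 1)) := by
  choose F hF using h
  let f : (n : ℕ) → {b // P n b} := fun n =>
    Nat.rec ⟨b, h0⟩ (fun n x => ⟨F n x.1 x.2, (hF n x.1 x.2).1⟩) n
  exact ⟨fun n => (f n).1, rfl, fun n => ⟨(f n).2, (hF n _ (f n).2).2⟩⟩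

/-- One step of a `JoinChain`: refine `s' + w = s + e + r`; the part `σ` of `e` inside `s'` leaves
`e`, and the parts of `s` and `r` outside `s'` make up `r'`. -/
theorem exists_join_step {s e r s' w : α} (h : A.ListSum [s, e, r] j) (hw : A.IsSum s' w j) :
    ∃ σ e' r', A.IsSum σ e' e ∧ A.le σ s' ∧ A.ListSum [s', e', r'] j ∧
      ∃ u, A.ListSum [s, σ, r] u ∧ A.ListSum [s', r'] u := by
  obtain ⟨er, her, hj⟩ := id h
  rw [listSum_pair] at her
  obtain ⟨s₀, t₀, x, y, hs, hxy, hx', hy'⟩ := hj.refine hw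
  obtain ⟨s₁, t₁, s₂, t₂, he, hr, hx, hy⟩ := her.refine hxy
  obtain ⟨r', ht₀₂, hw'⟩ := hy.left_comm hy'
  have hall : A.ListSum [s₀, t₀, s₁, t₁, s₂, t₂] j :=
    (listSum_flatten (L := [[s₀, t₀], [s₁, t₁], [s₂, t₂]])
      (.cons (listSum_pair.2 hs) (.cons (listSum_pair.2 he) (.cons (listSum_pair.2 hr) .nil)))).2 h
  obtain ⟨u, hu, -⟩ : A.ListSum [t₁, s₀, t₀, s₁, s₂, t₂] j := hall.perm_of_coe_eq <| by
    simp only [← Multiset.cons_coe, Multiset.coe_nil, ← Multiset.singleton_add]; abel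
  refine ⟨s₁, t₁, r', he, hx.le_left.trans hx'.le_right, ⟨w, listSum_pair.2 hw', hw⟩, u, ?_, ?_⟩
  · exact (listSum_flatten (L := [[s₀, t₀], [s₁], [s₂, t₂]]) (.cons (listSum_pair.2 hs)
      (.cons (listSum_singleton.2 rfl) (.cons (listSum_pair.2 hr) .nil)))).1 hu
  · refine (listSum_flatten (L := [[s₀, s₁, s₂], [t₀, t₂]])
      (.cons ⟨x, listSum_pair.2 hx, hx'⟩ (.cons (listSum_pair.2 ht₀₂) .nil))).1 ?_
    refine hu.perm_of_coe_eq (l' := [s₀, s₁, s₂, t₀, t₂]) ?_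
    simp only [← Multiset.cons_coe, Multiset.coe_nil, ← Multiset.singleton_add]; abel

/-- Decompositions `j = s n + e n + r n` in which `r n` is made of pieces of `s 0, …, s (n - 1)`
and `e n` shrinks by `σ n ≤ s (n + 1)`. Writing `e n = c + ∑_{i ≥ n} σ i`, the element `c` turns
out to be redundant in `j`, which bounds `φ j` by `∑_{i ≤ n} φ (s i) + φ (∑_{i ≥ n} σ i)`. -/
structure JoinChain (A : GCA α) (s : ℕ → α) (j : α) where
  e : ℕ → α
  r : ℕ → α
  σ : ℕ → α
  r_zero : r 0 = A.zero
  listSum : ∀ n, A.ListSum [s n, e n, r n] j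
  isSum : ∀ n, A.IsSum (σ n) (e (n + 1)) (e n)
  le : ∀ n, A.le (σ n) (s (n + 1))
  exchange : ∀ n, ∃ u, A.ListSum [s n, σ n, r n] u ∧ A.ListSum [s (n + 1), r (n + 1)] u

theorem IsJoin.nonempty_joinChain (hj : A.IsJoin s j) : Nonempty (A.JoinChain s j) := by
  obtain ⟨e₀, he₀⟩ := hj.1 0
  obtain ⟨f, hf0, hf⟩ := exists_seq_of_step (b := (e₀, A.zero))
    (P := fun n p => A.ListSum [s n, p.1, p.2] j)
    (R := fun n p q => ∃ σ, A.IsSum σ q.1 p.1 ∧ A.le σ (s (n + 1)) ∧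
      ∃ u, A.ListSum [s n, σ, p.2] u ∧ A.ListSum [s (n + 1), q.2] u)
    ⟨e₀, listSum_pair.2 (isSum_zero_right e₀), he₀⟩ fun n p hp => by
      obtain ⟨w, hw⟩ := hj.1 (n + 1)
      obtain ⟨σ, e', r', hσ, hσs, h', hu⟩ := exists_join_step hp hw
      exact ⟨(e', r'), h', σ, hσ, hσs, hu⟩
  choose σ hσ using fun n => (hf n).2
  exact ⟨⟨fun n => (f n).1, fun n => (f n).2, σ, by rw [hf0], fun n => (hf n).1,
    fun n => (hσ n).1, fun n => (hσ n).2.1, fun n => (hσ n).2.2⟩⟩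

namespace JoinChain

variable (C : A.JoinChain s j)

theorem map_r_le_sum {φ : α → ℝ≥0} (hφ : A.IsMeasure φ) (n : ℕ) :
    φ (C.r n) ≤ ∑ i ∈ Finset.range n, φ (s i) := by
  induction n with
  | zero => simp [C.r_zero, hφ.map_zero]
  | succ n ih =>
    obtain ⟨u, hu, hu'⟩ := C.exchange n
    have hσ := hφ.mono (C.le n)
    have hsum := (hφ.map_listSum hu).symm.trans (hφ.map_listSum hu')
    simp only [List.map_cons, List.map_nil, List.sum_cons, List.sum_nil] at hsum
    rw [Finset.sum_range_succ]
    rw [← NNReal.coe_le_coe] at hσ ih ⊢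
    have := congrArg NNReal.toReal hsum
    push_cast at this ih ⊢
    linarith

theorem exists_isSum_of_remainder {c : α} (hj : A.IsJoin s j)
    (hc : ∀ n, A.sumDef (fun i => C.σ (i + n)) ∧ A.IsSum c (A.sum fun i => C.σ (i + n)) (C.e n)) :
    ∃ V, A.IsSum c V j ∧ A.le j V := by
  set T : ℕ → α := fun n => A.sum fun i => C.σ (i + n)
  have hT (n : ℕ) : A.IsSum (C.σ n) (T (n + 1)) (T n) := by
    convert (sum_tail_isSum (hc n).1).2 using 2
    · simp
    · simp only [← Nat.add_assoc, Nat.add_right_comm _ n 1]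
  have hjn (n : ℕ) : A.ListSum [s n, c, T n, C.r n] j :=
    (listSum_flatten (L := [[s n], [c, T n], [C.r n]]) (.cons (listSum_singleton.2 rfl)
      (.cons (listSum_pair.2 (hc n).2) (.cons (listSum_singleton.2 rfl) .nil)))).2 (C.listSum n)
  obtain ⟨V, hV, hcV⟩ : A.ListSum [c, s 0, T 0, C.r 0] j := (hjn 0).perm_of_coe_eq <| by
    simp only [← Multiset.cons_coe, Multiset.coe_nil, ← Multiset.singleton_add]; abel
  refine ⟨V, hcV, hj.2 V fun n => ?_⟩
  suffices hVn : ∀ n, A.ListSum [s n, T n, C.r n] V from (hVn n).le_of_cons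
  intro n
  induction n with
  | zero => exact hV
  | succ n ih =>
    obtain ⟨u, hu, hu'⟩ := C.exchange n
    have h : A.ListSum [s n, C.σ n, T (n + 1), C.r n] V :=
      (listSum_flatten (L := [[s n], [C.σ n, T (n + 1)], [C.r n]]) (.cons (listSum_singleton.2 rfl)
        (.cons (listSum_pair.2 (hT n)) (.cons (listSum_singleton.2 rfl) .nil)))).2 ih
    obtain ⟨u', hu'', hV'⟩ : A.ListSum [T (n + 1), s n, C.σ n, C.r n] V := h.perm_of_coe_eq <| by
      simp only [← Multiset.cons_coe, Multiset.coe_nil, ← Multiset.singleton_add]; abel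
    rw [hu''.unique hu] at hV'
    refine ListSum.perm_of_coe_eq (l := [T (n + 1), s (n + 1), C.r (n + 1)]) ⟨u, hu', hV'⟩ ?_
    simp only [← Multiset.cons_coe, Multiset.coe_nil, ← Multiset.singleton_add]; abel

end JoinChain

open Filter Topology in
theorem IsMeasure.le_tsum_of_isJoin {φ : α → ℝ≥0} (hφ : A.IsMeasure φ) (hj : A.IsJoin s j)
    (hs : Summable fun n => φ (s n)) : φ j ≤ ∑' n, φ (s n) := by
  obtain ⟨C⟩ := hj.nonempty_joinChain
  obtain ⟨c, hc⟩ := exists_remainder C.isSum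
  obtain ⟨V, hcV, hjV⟩ := C.exists_isSum_of_remainder hj hc
  have hc0 : φ c = 0 := by simpa [hφ.map_isSum hcV] using hφ.mono hjV
  set T : ℕ → α := fun n => A.sum fun i => C.σ (i + n)
  have hT : Tendsto (fun n => φ (T n)) atTop (𝓝 0) := by
    simpa only [T, fun n => ((hφ.hasSum (hc n).1).tsum_eq).symm]
      using NNReal.tendsto_sum_nat_add fun i => φ (C.σ i)
  refine ge_of_tendsto' (by simpa using tendsto_const_nhds.add hT) fun n => ?_
  calc φ j = φ (s n) + φ (C.r n) + φ (T n) := by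
        rw [hφ.map_listSum (C.listSum n)]
        simp only [List.map_cons, List.map_nil, List.sum_cons, List.sum_nil]
        rw [hφ.map_isSum (hc n).2, hc0]
        ring
    _ ≤ ∑ i ∈ Finset.range (n + 1), φ (s i) + φ (T n) := by
        rw [Finset.sum_range_succ, add_comm _ (φ (s n))]
        gcongr
        exact C.map_r_le_sum hφ n
    _ ≤ ∑' i, φ (s i) + φ (T n) := by
        gcongr
        exact hs.sum_le_tsum _ fun _ _ => zero_le

end Join

section Orbit

open Filter

variable {Γ : Type*} [Group Γ] {act : Γ → α → α} {g : ℕ → Γ}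

theorem IsJoin.act_eq (hact : A.IsAction act) (hg : Function.Surjective g) {x j : α}
    (hj : A.IsJoin (fun k => act (g k) x) j) (γ : Γ) : act γ j = j := by
  have hle (γ : Γ) : A.le j (act γ j) := hj.2 _ fun k => by
    obtain ⟨m, hm⟩ := hg (γ⁻¹ * g k)
    simpa only [hact.2.1, hm, mul_inv_cancel_left] using hact.le γ (hj.1 m)
  exact (le.antisymm (hle γ) (by simpa only [hact.act_act_inv] using hact.le γ (hle γ⁻¹))).symm

theorem eq_zero_of_forall_act_eq_zero (hact : A.IsAction act)
    (hjoin : ∀ s : ℕ → α, ∃ j, A.IsJoin s j) (hg : Function.Surjective g) {p q : α → ℝ≥0}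
    (hp : A.IsMeasure p) (hq : A.IsMeasure q) (hagree : ∀ e, (∀ γ : Γ, act γ e = e) → p e = q e)
    {x : α} (hx : ∀ γ, q (act γ x) = 0) : p x = 0 := by
  obtain ⟨j, hj⟩ := hjoin fun k => act (g k) x
  obtain ⟨k, hk⟩ := hg 1
  have hxj : A.le x j := by simpa only [hk, hact.1] using hj.1 k
  have hqj : q j = 0 := by simpa [hx] using hq.le_tsum_of_isJoin hj (by simp [hx])
  exact le_antisymm ((hp.mono hxj).trans_eq ((hagree j (hj.act_eq hact hg)).trans hqj)) bot_le

theorem exists_iterated_split (P : ℕ → α → α → Prop) (h : ∀ k x, ∃ b c, A.IsSum b c x ∧ P k b c)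
    (a : α) : ∃ (b : ℕ → α) (r : α), A.sumDef b ∧ A.IsSum r (A.sum b) a ∧
      ∀ k, ∃ c, P k (b k) c ∧ A.le r c := by
  choose B C hBC hP using h
  let x : ℕ → α := fun k => Nat.rec a (fun k y => C k y) k
  obtain ⟨r, hr⟩ := exists_remainder (s := x) (t := fun k => B k (x k)) fun k => hBC k (x k)
  exact ⟨fun k => B k (x k), r, (hr 0).1, (hr 0).2,
    fun k => ⟨x (k + 1), hP k (x k), (hr (k + 1)).2.le_left⟩⟩

theorem eq_zero_of_measureInf_eq_zero (hact : A.IsAction act)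
    (hjoin : ∀ s : ℕ → α, ∃ j, A.IsJoin s j) (hg : ∀ γ, ∃ᶠ k in atTop, g k = γ) {p q : α → ℝ≥0}
    (hp : A.IsMeasure p) (hq : A.IsMeasure q)
    (hinf : ∀ γ x, A.measureInf p (fun y => q (act γ y)) x = 0)
    (hagree : ∀ e, (∀ γ : Γ, act γ e = e) → p e = q e) (a : α) : p a = 0 := by
  refine le_antisymm (le_of_forall_pos_le_add fun ε hε => ?_) bot_le
  obtain ⟨δ, hδ, d, hδd, hdε⟩ := NNReal.exists_pos_sum_of_countable hε.ne' ℕ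
  obtain ⟨b, r, hb, hrb, hbr⟩ := exists_iterated_split (fun k b c => p b + q (act (g k) c) < δ k)
    (fun k x => exists_lt_of_measureInf_lt (by rw [hinf]; exact hδ k)) a
  have hr : p r = 0 := by
    refine eq_zero_of_forall_act_eq_zero hact hjoin (fun γ => (hg γ).exists) hp hq hagree
      fun γ => le_antisymm ?_ bot_le
    refine ge_of_tendsto_of_frequently (NNReal.tendsto_atTop_zero_of_summable hδd.summable)
      ((hg γ).mono fun k hk => ?_)
    obtain ⟨c, hc, hrc⟩ := hbr k
    exact hk ▸ (hq.mono (hact.le _ hrc)).trans (le_add_self.trans hc.le)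
  rw [_root_.zero_add]
  calc p a = p r + p (A.sum b) := hp.map_isSum hrb
    _ = p (A.sum b) := by rw [hr, _root_.zero_add]
    _ ≤ d := hasSum_le (fun k => let ⟨_, hc, _⟩ := hbr k; le_self_add.trans hc.le)
      (hp.hasSum hb) hδd
    _ ≤ ε := hdε.le

end Orbit

section Exhaustion

open Filter Topology

variable {Γ : Type*} [Group Γ] {act : Γ → α → α} {g : ℕ → Γ} {μ ν : α → ℝ≥0}

theorem hasSum_of_succ_add_eq {f d : ℕ → ℝ≥0} (h : ∀ k, f (k + 1) + d k = f k) :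
    HasSum d (f 0 - ⨅ k, f k) := by
  have hpartial (n : ℕ) : f n + ∑ i ∈ Finset.range n, d i = f 0 := by
    induction n with
    | zero => simp
    | succ n ih => rw [Finset.sum_range_succ, ← add_assoc, add_right_comm, h, ih]
  have hanti : Antitone f := antitone_nat_of_succ_le fun k => (h k).symm ▸ le_self_add
  refine NNReal.hasSum_iff_tendsto_nat.2 ?_
  simp_rw [fun n => eq_tsub_of_add_eq ((add_comm _ _).trans (hpartial n))]
  exact tendsto_const_nhds.sub (tendsto_atTop_ciInf hanti (OrderBot.bddBelow _))

theorem IsMeasure.of_hasSum_tsub {p : α → ℝ≥0} {c : ℕ → α → ℝ≥0} (hμ : A.IsMeasure μ)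
    (hc : ∀ k, A.IsMeasure (c k)) (hsum : ∀ x, HasSum (fun k => c k x) (μ x - p x))
    (hle : ∀ x, p x ≤ μ x) : A.IsMeasure p := by
  have h := hμ.sub (IsMeasure.tsum hc fun x => (hsum x).summable) fun x =>
    (hsum x).tsum_eq ▸ tsub_le_self
  convert h using 1
  funext x
  rw [(hsum x).tsum_eq, tsub_tsub_cancel_of_le (hle x)]

theorem measureInf_act_inv_le (hact : A.IsAction act) {p q : α → ℝ≥0} (hp : A.IsMeasure p)
    (γ : Γ) (x : α) : A.measureInf p (fun y => q (act γ y)) (act γ⁻¹ x) ≤ q x := by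
  simpa only [hact.act_act_inv] using measureInf_le_right (ψ := fun y => q (act γ y)) hp (act γ⁻¹ x)

/-- The greedy exhaustion: step `k` moves the largest measure `c ≤ p` with `(g k) • c ≤ q`. -/
noncomputable def exhaustion (A : GCA α) (act : Γ → α → α) (g : ℕ → Γ) (μ ν : α → ℝ≥0) :
    ℕ → (α → ℝ≥0) × (α → ℝ≥0)
  | 0 => (μ, ν)
  | k + 1 =>
    let c := A.measureInf (exhaustion A act g μ ν k).1
      fun y => (exhaustion A act g μ ν k).2 (act (g k) y)
    (fun x => (exhaustion A act g μ ν k).1 x - c x,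
      fun x => (exhaustion A act g μ ν k).2 x - c (act (g k)⁻¹ x))

noncomputable def exhaustionPiece (A : GCA α) (act : Γ → α → α) (g : ℕ → Γ) (μ ν : α → ℝ≥0)
    (k : ℕ) : α → ℝ≥0 :=
  A.measureInf (A.exhaustion act g μ ν k).1 fun y => (A.exhaustion act g μ ν k).2 (act (g k) y)

theorem isMeasure_exhaustion (hact : A.IsAction act) (hμ : A.IsMeasure μ) (hν : A.IsMeasure ν)
    (k : ℕ) :
    A.IsMeasure (A.exhaustion act g μ ν k).1 ∧ A.IsMeasure (A.exhaustion act g μ ν k).2 := by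
  induction k with
  | zero => exact ⟨hμ, hν⟩
  | succ k ih =>
    have hq := ih.2.comp_act hact (g k)
    have hc := ih.1.measureInf hq
    exact ⟨ih.1.sub hc (measureInf_le_left hq),
      ih.2.sub (hc.comp_act hact (g k)⁻¹) (measureInf_act_inv_le hact ih.1 (g k))⟩

theorem isMeasure_exhaustionPiece (hact : A.IsAction act) (hμ : A.IsMeasure μ)
    (hν : A.IsMeasure ν) (k : ℕ) : A.IsMeasure (A.exhaustionPiece act g μ ν k) :=
  (isMeasure_exhaustion hact hμ hν k).1.measureInf
    ((isMeasure_exhaustion hact hμ hν k).2.comp_act hact (g k))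

theorem hasSum_exhaustionPiece (hact : A.IsAction act) (hμ : A.IsMeasure μ) (hν : A.IsMeasure ν)
    (x : α) : HasSum (fun k => A.exhaustionPiece act g μ ν k x)
      (μ x - ⨅ k, (A.exhaustion act g μ ν k).1 x) :=
  hasSum_of_succ_add_eq (f := fun k => (A.exhaustion act g μ ν k).1 x) fun k =>
    tsub_add_cancel_of_le <| measureInf_le_left
      ((isMeasure_exhaustion hact hμ hν k).2.comp_act hact (g k)) x

theorem hasSum_exhaustionPiece_act (hact : A.IsAction act) (hμ : A.IsMeasure μ)
    (hν : A.IsMeasure ν) (x : α) : HasSum (fun k => A.exhaustionPiece act g μ ν k (act (g k)⁻¹ x))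
      (ν x - ⨅ k, (A.exhaustion act g μ ν k).2 x) :=
  hasSum_of_succ_add_eq (f := fun k => (A.exhaustion act g μ ν k).2 x) fun k =>
    tsub_add_cancel_of_le <| measureInf_act_inv_le hact (isMeasure_exhaustion hact hμ hν k).1 (g k) x

theorem measureInf_iInf_exhaustion_eq_zero (hact : A.IsAction act) (hμ : A.IsMeasure μ)
    (hν : A.IsMeasure ν) (hg : ∀ γ, ∃ᶠ k in atTop, g k = γ) (γ : Γ) (x : α) :
    A.measureInf (fun y => ⨅ k, (A.exhaustion act g μ ν k).1 y)
      (fun y => ⨅ k, (A.exhaustion act g μ ν k).2 (act γ y)) x = 0 := by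
  refine le_antisymm (ge_of_tendsto_of_frequently (NNReal.tendsto_atTop_zero_of_summable
    (hasSum_exhaustionPiece (g := g) hact hμ hν x).summable) ((hg γ).mono fun k hk => ?_)) bot_le
  subst hk
  exact measureInf_mono (fun y => ciInf_le (OrderBot.bddBelow _) k)
    (fun y => ciInf_le (OrderBot.bddBelow _) k) x

theorem exists_equidecomposition (hact : A.IsAction act) (hjoin : ∀ s : ℕ → α, ∃ j, A.IsJoin s j)
    (hg : ∀ γ, ∃ᶠ k in atTop, g k = γ) (hμ : A.IsMeasure μ) (hν : A.IsMeasure ν)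
    (hagree : ∀ e, (∀ γ : Γ, act γ e = e) → μ e = ν e) :
    ∃ c : ℕ → α → ℝ≥0, (∀ n, A.IsMeasure (c n)) ∧ (∀ x, HasSum (fun n => c n x) (μ x)) ∧
      ∀ x, HasSum (fun n => c n (act (g n)⁻¹ x)) (ν x) := by
  set p : α → ℝ≥0 := fun x => ⨅ k, (A.exhaustion act g μ ν k).1 x
  set q : α → ℝ≥0 := fun x => ⨅ k, (A.exhaustion act g μ ν k).2 x
  have hc := isMeasure_exhaustionPiece (g := g) hact hμ hν
  have hcμ : ∀ x, HasSum (fun k => A.exhaustionPiece act g μ ν k x) (μ x - p x) :=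
    hasSum_exhaustionPiece hact hμ hν
  have hcν : ∀ x, HasSum (fun k => A.exhaustionPiece act g μ ν k (act (g k)⁻¹ x)) (ν x - q x) :=
    hasSum_exhaustionPiece_act hact hμ hν
  have hpμ (x : α) : p x ≤ μ x := ciInf_le (OrderBot.bddBelow _) 0
  have hqν (x : α) : q x ≤ ν x := ciInf_le (OrderBot.bddBelow _) 0
  have hp : A.IsMeasure p := hμ.of_hasSum_tsub hc hcμ hpμ
  have hq : A.IsMeasure q := hν.of_hasSum_tsub (fun k => (hc k).comp_act hact (g k)⁻¹) hcν hqν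
  have hpq (e : α) (he : ∀ γ : Γ, act γ e = e) : p e = q e := by
    have h := (hcμ e).unique (by simpa only [he] using hcν e)
    rw [hagree e he] at h
    exact (tsub_right_inj (hagree e he ▸ hpμ e) (hqν e)).1 h
  have hp0 : ∀ x, p x = 0 :=
    eq_zero_of_measureInf_eq_zero hact hjoin hg hp hq
      (measureInf_iInf_exhaustion_eq_zero hact hμ hν hg) hpq
  have hq0 (x : α) : q x = 0 := eq_zero_of_forall_act_eq_zero hact hjoin (fun γ => (hg γ).exists)
    hq hp (fun e he => (hpq e he).symm) fun _ => hp0 _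
  exact ⟨_, hc, fun x => by simpa [hp0] using hcμ x, fun x => by simpa [hq0] using hcν x⟩

end Exhaustion

theorem exists_seq_frequently_eq (Γ : Type*) [Nonempty Γ] [Countable Γ] :
    ∃ g : ℕ → Γ, ∀ γ, ∃ᶠ k in Filter.atTop, g k = γ := by
  obtain ⟨f, hf⟩ := exists_surjective_nat Γ
  refine ⟨fun n => f n.unpair.1, fun γ => ?_⟩
  obtain ⟨m, rfl⟩ := hf γ
  exact Filter.frequently_atTop.2 fun N => ⟨Nat.pair m N, Nat.right_le_pair m N, by simp⟩

end GCA

/-- Let `Γ` be a countable group acting on a GCA `A` with countable joins, and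
let `μ` and `ν` be finite measures on `A`. Then `μ` and `ν` agree on every
`Γ`-invariant element of `A` iff they are equidecomposable: there are finite
measures `(c n)` with labels `(g n)` in `Γ` such that `μ = ∑ₙ c n` and
`ν = ∑ₙ (g n) • (c n)` pointwise, where `(γ • c)(a) = c (γ⁻¹ • a)`. -/
theorem GCA.measures_agree_iff_equidecomposable {α Γ : Type*} [Group Γ]
    [Countable Γ] (A : GCA α) (act : Γ → α → α) (hact : A.IsAction act)
    (hjoin : ∀ s : ℕ → α, ∃ j, (∀ n, A.le (s n) j) ∧
      ∀ x, (∀ n, A.le (s n) x) → A.le j x)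
    (μ ν : α → ℝ≥0) (hμ : A.IsMeasure μ) (hν : A.IsMeasure ν) :
    (∀ a, (∀ γ : Γ, act γ a = a) → μ a = ν a) ↔
      ∃ (c : ℕ → α → ℝ≥0) (g : ℕ → Γ), (∀ n, A.IsMeasure (c n)) ∧
        (∀ x, HasSum (fun n => c n x) (μ x)) ∧
        (∀ x, HasSum (fun n => c n (act (g n)⁻¹ x)) (ν x)) := by
  refine ⟨fun hagree => ?_, fun ⟨c, g, _, hcμ, hcν⟩ a ha => ?_⟩
  · obtain ⟨g, hg⟩ := exists_seq_frequently_eq Γ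
    obtain ⟨c, hc⟩ := exists_equidecomposition hact hjoin hg hμ hν hagree
    exact ⟨c, g, hc⟩
  · exact (hcμ a).unique (by simpa only [ha] using hcν a)
end

section
/- Let Γ be a countable group acting on a standard Borel space X by Borel automorphisms, and let μ and ν be finite Borel measures on X. Then μ(S) = ν(S) for every Γ-invariant Borel set S if and only if there exist Borel measures (μ_γ)_{γ∈Γ} on X with μ = ∑_γ μ_γ and ν = ∑_γ γ_*μ_γ. -/
/-!
Enumerate `Γ` as `γ₀, γ₁, …` and transport mass greedily: at step `n`, with `a`, `b` the current
remainders of `μ`, `ν`, set `mₙ = a ⊓ (γₙ⁻¹)_* b` and remove `mₙ` from `a` and `(γₙ)_* mₙ`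
from `b`. For finite measures `a - a ⊓ b` and `b - a ⊓ b` are mutually singular, and remainders
only shrink, so the final remainders `μ'`, `ν'` satisfy `μ' ⟂ γ_* ν'` for every `γ`. Taking `A`
with `μ' A = 0` and `γ_* ν' Aᶜ = 0` for all `γ`, the invariant set `T = ⋃ γ, γ⁻¹ Aᶜ` is
`ν'`-null and `μ'`-conull; since `μ'` and `ν'` still agree on invariant sets, both vanish.
-/

open MeasureTheory Measure
open scoped ENNReal

theorem Set.preimage_smul_iUnion_preimage_smul {X Γ : Type*} [Group Γ] [MulAction Γ X]
    (B : Set X) (δ : Γ) :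
    (δ • ·) ⁻¹' ⋃ γ : Γ, (γ • ·) ⁻¹' B = ⋃ γ : Γ, (γ • ·) ⁻¹' B := by
  simp only [Set.preimage_iUnion, Set.preimage_preimage, smul_smul]
  exact (Equiv.mulRight δ).surjective.iUnion_comp fun γ => (γ • ·) ⁻¹' B

namespace MeasureTheory.Measure

variable {X : Type*} [MeasurableSpace X]

theorem mutuallySingular_sub_inf (a b : Measure X) [IsFiniteMeasure a] :
    (a - a ⊓ b) ⟂ₘ (b - a ⊓ b) := by
  have : IsFiniteMeasure (a ⊓ b) := isFiniteMeasure_of_le a inf_le_left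
  refine mutuallySingular_of_disjoint fun d hda hdb => le_iff'.2 fun s => ?_
  have hda' : d + a ⊓ b ≤ a := by
    calc d + a ⊓ b ≤ (a - a ⊓ b) + a ⊓ b := add_le_add hda le_rfl
      _ = a := sub_add_cancel_of_le inf_le_left
  have hdb' : d + a ⊓ b ≤ b := by
    calc d + a ⊓ b ≤ (b - a ⊓ b) + a ⊓ b := add_le_add hdb le_rfl
      _ = b := sub_add_cancel_of_le inf_le_right
  have hle : d s + (a ⊓ b) s ≤ 0 + (a ⊓ b) s := by
    simpa using le_iff'.1 (le_inf hda' hdb') s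
  exact ENNReal.le_of_add_le_add_right (measure_ne_top _ s) hle

theorem sum_fiberwise {κ ι : Type*} (g : κ → ι) (F : κ → Measure X) :
    sum (fun i => sum fun k : g ⁻¹' {i} => F k) = sum F := by
  ext s hs
  simp only [sum_apply _ hs]
  exact ENNReal.tsum_fiberwise (fun k => F k s) g

theorem exists_eq_sum_add_of_eq_add (a m : ℕ → Measure X) [IsFiniteMeasure (a 0)]
    (h : ∀ n, a n = a (n + 1) + m n) :
    ∃ a' : Measure X, a 0 = sum m + a' ∧ ∀ n, a' ≤ a n := by
  have hpartial : ∀ n, a 0 = (∑ k ∈ Finset.range n, m k) + a n := by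
    intro n
    induction n with
    | zero => simp
    | succ n ih => rw [ih, h n, Finset.sum_range_succ]; abel
  have hpartial_le : ∀ n, ∑ k ∈ Finset.range n, m k ≤ sum m := fun n =>
    le_iff.2 fun s hs => by
      rw [finsetSum_apply, sum_apply _ hs]
      exact ENNReal.sum_le_tsum _
  have hsum_le : sum m ≤ a 0 := le_iff.2 fun s hs => by
    rw [sum_apply _ hs, ENNReal.tsum_eq_iSup_nat]
    refine iSup_le fun n => ?_
    rw [← finsetSum_apply, hpartial n, add_apply]
    exact le_self_add
  have : IsFiniteMeasure (sum m) := isFiniteMeasure_of_le _ hsum_le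
  refine ⟨a 0 - sum m, by rw [add_comm, sub_add_cancel_of_le hsum_le], fun n => ?_⟩
  refine sub_le_of_le_add ?_
  calc a 0 = (∑ k ∈ Finset.range n, m k) + a n := hpartial n
    _ ≤ sum m + a n := add_le_add (hpartial_le n) le_rfl
    _ = a n + sum m := add_comm _ _

section Greedy

variable (e : X ≃ᵐ X)

noncomputable def greedyCommon (p : Measure X × Measure X) : Measure X :=
  p.1 ⊓ p.2.map e.symm

noncomputable def greedyStep (p : Measure X × Measure X) : Measure X × Measure X :=
  (p.1 - greedyCommon e p, (p.2.map e.symm - greedyCommon e p).map e)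

variable (p : Measure X × Measure X) [IsFiniteMeasure p.1]

instance : IsFiniteMeasure (greedyCommon e p) := isFiniteMeasure_of_le p.1 inf_le_left

theorem greedyStep_fst_add_greedyCommon : (greedyStep e p).1 + greedyCommon e p = p.1 :=
  sub_add_cancel_of_le inf_le_left

theorem greedyStep_snd_add_map_greedyCommon :
    (greedyStep e p).2 + (greedyCommon e p).map e = p.2 := by
  dsimp only [greedyStep]
  rw [← Measure.map_add _ _ e.measurable,
    sub_add_cancel_of_le (ν := greedyCommon e p) inf_le_right, MeasurableEquiv.map_map_symm]

theorem mutuallySingular_greedyStep :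
    (greedyStep e p).1 ⟂ₘ (greedyStep e p).2.map e.symm := by
  rw [greedyStep, MeasurableEquiv.map_symm_map]
  exact mutuallySingular_sub_inf _ _

end Greedy

noncomputable def greedySeq (e : ℕ → X ≃ᵐ X) (μ ν : Measure X) : ℕ → Measure X × Measure X
  | 0 => (μ, ν)
  | n + 1 => greedyStep (e n) (greedySeq e μ ν n)

theorem exists_eq_sum_add_mutuallySingular_map (e : ℕ → X ≃ᵐ X) (μ ν : Measure X)
    [IsFiniteMeasure μ] [IsFiniteMeasure ν] :
    ∃ (m : ℕ → Measure X) (μ' ν' : Measure X), μ = sum m + μ' ∧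
      ν = sum (fun n => (m n).map (e n)) + ν' ∧ ∀ n, μ' ⟂ₘ ν'.map (e n).symm := by
  set s := greedySeq e μ ν
  have hfst_le : ∀ n, (s n).1 ≤ μ := by
    intro n
    induction n with
    | zero => exact le_rfl
    | succ n ih => exact sub_le.trans ih
  have hfin (n : ℕ) : IsFiniteMeasure (s n).1 := isFiniteMeasure_of_le μ (hfst_le n)
  have : IsFiniteMeasure (s 0).2 := ‹IsFiniteMeasure ν›
  set m := fun n => greedyCommon (e n) (s n)
  obtain ⟨μ', hμ, hμ'⟩ := exists_eq_sum_add_of_eq_add (fun n => (s n).1) m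
    fun n => (greedyStep_fst_add_greedyCommon (e n) (s n)).symm
  obtain ⟨ν', hν, hν'⟩ := exists_eq_sum_add_of_eq_add (fun n => (s n).2)
    (fun n => (m n).map (e n)) fun n => (greedyStep_snd_add_map_greedyCommon (e n) (s n)).symm
  refine ⟨m, μ', ν', hμ, hν, fun n => ?_⟩
  exact (mutuallySingular_greedyStep (e n) (s n)).mono (hμ' (n + 1))
    (map_mono (hν' (n + 1)) (e n).symm.measurable)

theorem sum_map_smul_apply_of_forall_preimage_eq {Γ ι : Type*} [SMul Γ X]
    [MeasurableConstSMul Γ X] (m : ι → Measure X) (g : ι → Γ) {S : Set X}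
    (hS : MeasurableSet S) (hinv : ∀ γ : Γ, (γ • ·) ⁻¹' S = S) :
    sum (fun i => (m i).map (g i • ·)) S = sum m S := by
  simp only [sum_apply _ hS, map_apply (measurable_const_smul _) hS, hinv]

section GroupAction

variable {Γ : Type*} [Group Γ] [MulAction Γ X] [MeasurableConstSMul Γ X] [Countable Γ]

theorem eq_zero_of_forall_mutuallySingular_map_smul {μ ν : Measure X}
    (hinv : ∀ S, MeasurableSet S → (∀ γ : Γ, (γ • ·) ⁻¹' S = S) → μ S = ν S)
    (hsing : ∀ γ : Γ, μ ⟂ₘ ν.map (γ • ·)) : μ = 0 ∧ ν = 0 := by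
  obtain ⟨A, hA, hμA, hνA⟩ := MutuallySingular.sum_right.2 hsing
  set T := ⋃ γ : Γ, (γ • ·) ⁻¹' Aᶜ
  have hT : MeasurableSet T := .iUnion fun γ => measurable_const_smul γ hA.compl
  have hTinv : ∀ γ : Γ, (γ • ·) ⁻¹' T = T := Set.preimage_smul_iUnion_preimage_smul _
  have hνT : ν T = 0 := measure_iUnion_null fun γ => by
    rw [← map_apply (measurable_const_smul γ) hA.compl]
    exact sum_apply_eq_zero.1 hνA γ
  have hμTc : μ Tᶜ = 0 := by
    refine measure_mono_null (Set.compl_subset_comm.1 ?_) hμA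
    exact Set.subset_iUnion_of_subset 1 (by simp)
  have hμT : μ T = 0 := (hinv T hT hTinv).trans hνT
  have hνTc : ν Tᶜ = 0 :=
    (hinv Tᶜ hT.compl fun γ => by rw [Set.preimage_compl, hTinv]).symm.trans hμTc
  constructor <;> refine measure_univ_eq_zero.1 ?_ <;> rw [← Set.union_compl_self T]
  exacts [measure_union_null hμT hμTc, measure_union_null hνT hνTc]

theorem exists_sum_eq_and_sum_map_smul_eq (μ ν : Measure X) [IsFiniteMeasure μ]
    [IsFiniteMeasure ν]
    (hinv : ∀ S, MeasurableSet S → (∀ γ : Γ, (γ • ·) ⁻¹' S = S) → μ S = ν S) :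
    ∃ m : Γ → Measure X, μ = sum m ∧ ν = sum fun γ => (m γ).map (γ • ·) := by
  have : Nonempty Γ := ⟨1⟩
  obtain ⟨g, hg⟩ := exists_surjective_nat Γ
  obtain ⟨m, μ', ν', hμ, hν, hsing⟩ :=
    exists_eq_sum_add_mutuallySingular_map (fun n => MeasurableEquiv.smul (g n)) μ ν
  simp only [MeasurableEquiv.symm_smul, MeasurableEquiv.smul_apply] at hν hsing
  have hinv' : ∀ S, MeasurableSet S → (∀ γ : Γ, (γ • ·) ⁻¹' S = S) → μ' S = ν' S := by
    intro S hS hSinv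
    have hsum_le : sum m ≤ μ := hμ ▸ Measure.le_add_right le_rfl
    have hfin : sum m S ≠ ∞ := ne_top_of_le_ne_top (measure_ne_top μ S) (hsum_le S)
    have hμν := hinv S hS hSinv
    rw [hμ, hν, add_apply, add_apply, sum_map_smul_apply_of_forall_preimage_eq m g hS hSinv]
      at hμν
    exact (ENNReal.add_right_inj hfin).1 hμν
  have hsing' : ∀ γ : Γ, μ' ⟂ₘ ν'.map (γ • ·) := fun γ => by
    obtain ⟨n, hn⟩ := hg γ⁻¹
    simpa [hn] using hsing n
  obtain ⟨rfl, rfl⟩ := eq_zero_of_forall_mutuallySingular_map_smul hinv' hsing'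
  refine ⟨fun γ => sum fun n : g ⁻¹' {γ} => m n, by rw [hμ, add_zero, sum_fiberwise], ?_⟩
  rw [hν, add_zero, ← sum_fiberwise g]
  refine congrArg sum (funext fun γ => ?_)
  rw [map_sum (measurable_const_smul γ).aemeasurable]
  exact congrArg sum (funext fun n => by rw [n.2])

end GroupAction

end MeasureTheory.Measure

theorem thorisson_general {X : Type*} [MeasurableSpace X]
    {Γ : Type*} [Group Γ] [Countable Γ]
    (act : Γ → X → X) (hmeas : ∀ γ, Measurable (act γ))
    (hone : ∀ x, act 1 x = x)
    (hmul : ∀ γ δ x, act γ (act δ x) = act (γ * δ) x)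
    (μ ν : Measure X) [IsFiniteMeasure μ] [IsFiniteMeasure ν] :
    (∀ S : Set X, MeasurableSet S → (∀ γ, act γ ⁻¹' S = S) → μ S = ν S) ↔
      ∃ m : Γ → Measure X, μ = Measure.sum m ∧
        ν = Measure.sum (fun γ => (m γ).map (act γ)) := by
  let _ : MulAction Γ X :=
    { smul := act, one_smul := hone, mul_smul := fun γ δ x => (hmul γ δ x).symm }
  have : MeasurableConstSMul Γ X := ⟨hmeas⟩
  refine ⟨exists_sum_eq_and_sum_map_smul_eq μ ν, ?_⟩
  rintro ⟨m, rfl, rfl⟩ S hS hSinv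
  exact (sum_map_smul_apply_of_forall_preimage_eq m id hS hSinv).symm

/-- Thorisson's theorem: if a countable group `Γ` acts on a standard Borel
space `X` by Borel automorphisms and `μ`, `ν` are finite Borel measures on
`X`, then `μ` and `ν` agree on every `Γ`-invariant Borel set iff there are
Borel measures `(m γ)_{γ ∈ Γ}` with `μ = ∑_γ m γ` and `ν = ∑_γ γ_* (m γ)`. -/
theorem thorisson {X : Type*} [MeasurableSpace X] [StandardBorelSpace X]
    {Γ : Type*} [Group Γ] [Countable Γ]
    (act : Γ → X → X) (hmeas : ∀ γ, Measurable (act γ))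
    (hone : ∀ x, act 1 x = x)
    (hmul : ∀ γ δ x, act γ (act δ x) = act (γ * δ) x)
    (μ ν : Measure X) [IsFiniteMeasure μ] [IsFiniteMeasure ν] :
    (∀ S : Set X, MeasurableSet S → (∀ γ, act γ ⁻¹' S = S) → μ S = ν S) ↔
      ∃ m : Γ → Measure X, μ = Measure.sum m ∧
        ν = Measure.sum (fun γ => (m γ).map (act γ)) :=
  thorisson_general act hmeas hone hmul μ ν
end

section
/- Let (X, μ) be a standard probability space with a probability-measure-preserving action of a countable group Γ, and let A, B be measurable sets. Then ν(A) = ν(B) for every Γ-invariant measure ν absolutely continuous with respect to μ if and only if A and B are equidecomposable modulo null sets: there exist measurable sets (A_γ)_{γ∈Γ}, pairwise disjoint up to null sets, with A = ⋃_γ A_γ and B = ⋃_γ γA_γ up to null sets, the sets γA_γ also pairwise disjoint mod null. -/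
open MeasureTheory



set_option linter.unusedSectionVars false

namespace EquidecompAux

variable {X : Type*} {Γ : Type*} [Group Γ]

def UV (act : Γ → X → X) (A B : Set X) (g : ℕ → Γ) : ℕ → Set X × Set X
  | 0 => (∅, ∅)
  | n + 1 =>
      ((UV act A B g n).1 ∪
        ((A \ (UV act A B g n).1) ∩ act (g n) ⁻¹' (B \ (UV act A B g n).2)),
       (UV act A B g n).2 ∪
        act (g n) '' ((A \ (UV act A B g n).1) ∩ act (g n) ⁻¹' (B \ (UV act A B g n).2)))

def F (act : Γ → X → X) (A B : Set X) (g : ℕ → Γ) (n : ℕ) : Set X :=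
  (A \ (UV act A B g n).1) ∩ act (g n) ⁻¹' (B \ (UV act A B g n).2)

variable {act : Γ → X → X} {A B : Set X} {g : ℕ → Γ}

lemma UV_succ_fst (n : ℕ) :
    (UV act A B g (n + 1)).1 = (UV act A B g n).1 ∪ F act A B g n := rfl

lemma UV_succ_snd (n : ℕ) :
    (UV act A B g (n + 1)).2 = (UV act A B g n).2 ∪ act (g n) '' F act A B g n := rfl

lemma fst_mono : Monotone fun n => (UV act A B g n).1 := by
  apply monotone_nat_of_le_succ
  intro n
  rw [UV_succ_fst]
  exact Set.subset_union_left

lemma snd_mono : Monotone fun n => (UV act A B g n).2 := by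
  apply monotone_nat_of_le_succ
  intro n
  rw [UV_succ_snd]
  exact Set.subset_union_left

lemma F_subset_A (n : ℕ) : F act A B g n ⊆ A :=
  fun _ hx => hx.1.1

lemma img_subset_B (n : ℕ) : act (g n) '' F act A B g n ⊆ B := by
  rintro x ⟨y, hy, rfl⟩
  exact hy.2.1

lemma F_disjoint_fst (n : ℕ) : F act A B g n ∩ (UV act A B g n).1 = ∅ := by
  ext x; simp only [Set.mem_inter_iff, Set.mem_empty_iff_false, iff_false, not_and]
  exact fun hx => hx.1.2

lemma img_disjoint_snd (n : ℕ) :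
    act (g n) '' F act A B g n ∩ (UV act A B g n).2 = ∅ := by
  ext x; simp only [Set.mem_inter_iff, Set.mem_empty_iff_false, iff_false, not_and]
  rintro ⟨y, hy, rfl⟩
  exact hy.2.2

lemma F_disjoint {m n : ℕ} (h : m < n) : F act A B g m ∩ F act A B g n = ∅ := by
  ext x
  simp only [Set.mem_inter_iff, Set.mem_empty_iff_false, iff_false, not_and]
  intro hm hn
  have h1 : x ∈ (UV act A B g n).1 :=
    fst_mono h (show x ∈ (UV act A B g (m+1)).1 by rw [UV_succ_fst]; exact Set.mem_union_right _ hm)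
  exact hn.1.2 h1

lemma img_disjoint {m n : ℕ} (h : m < n) :
    act (g m) '' F act A B g m ∩ act (g n) '' F act A B g n = ∅ := by
  ext x
  simp only [Set.mem_inter_iff, Set.mem_empty_iff_false, iff_false, not_and]
  intro hm hn
  have h1 : x ∈ (UV act A B g n).2 :=
    snd_mono h (show x ∈ (UV act A B g (m+1)).2 by rw [UV_succ_snd]; exact Set.mem_union_right _ hm)
  obtain ⟨y, hy, rfl⟩ := hn
  exact hy.2.2 h1

lemma fst_subset_iUnion (n : ℕ) : (UV act A B g n).1 ⊆ ⋃ k, F act A B g k := by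
  induction n with
  | zero => simp [UV]
  | succ n ih =>
      rw [UV_succ_fst]
      exact Set.union_subset ih (Set.subset_iUnion (fun k => F act A B g k) n)

lemma snd_subset_iUnion (n : ℕ) :
    (UV act A B g n).2 ⊆ ⋃ k, act (g k) '' F act A B g k := by
  induction n with
  | zero => simp [UV]
  | succ n ih =>
      rw [UV_succ_snd]
      exact Set.union_subset ih (Set.subset_iUnion (fun k => act (g k) '' F act A B g k) n)

lemma measurable_UV [MeasurableSpace X] (hmeas : ∀ γ, Measurable (act γ))
    (himg : ∀ (γ : Γ) (S : Set X), MeasurableSet S → MeasurableSet (act γ '' S))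
    (hA : MeasurableSet A) (hB : MeasurableSet B) (n : ℕ) :
    MeasurableSet (UV act A B g n).1 ∧ MeasurableSet (UV act A B g n).2 := by
  induction n with
  | zero => constructor <;> simp [UV]
  | succ n ih =>
      have hF : MeasurableSet (F act A B g n) :=
        ((hA.diff ih.1).inter ((hmeas (g n)) (hB.diff ih.2)))
      exact ⟨(ih.1).union hF, (ih.2).union (himg _ _ hF)⟩

lemma measurable_F [MeasurableSpace X] (hmeas : ∀ γ, Measurable (act γ))
    (himg : ∀ (γ : Γ) (S : Set X), MeasurableSet S → MeasurableSet (act γ '' S))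
    (hA : MeasurableSet A) (hB : MeasurableSet B) (n : ℕ) :
    MeasurableSet (F act A B g n) := by
  have := measurable_UV (act := act) (A := A) (B := B) (g := g) hmeas himg hA hB n
  exact (hA.diff this.1).inter ((hmeas (g n)) (hB.diff this.2))

/-- Key claim: nothing left in `A'` can be moved into `B'`. -/
lemma key (hg : Function.Surjective g) (γ : Γ) (x : X)
    (hx : x ∈ A \ ⋃ k, F act A B g k)
    (hx' : act γ x ∈ B \ ⋃ k, act (g k) '' F act A B g k) : False := by
  obtain ⟨n, rfl⟩ := hg γ
  have h1 : x ∉ (UV act A B g n).1 := fun h => hx.2 (fst_subset_iUnion n h)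
  have h2 : act (g n) x ∉ (UV act A B g n).2 := fun h => hx'.2 (snd_subset_iUnion n h)
  have : x ∈ F act A B g n := ⟨⟨hx.1, h1⟩, ⟨hx'.1, h2⟩⟩
  exact hx.2 (Set.mem_iUnion.2 ⟨n, this⟩)

end EquidecompAux

/-- Let `(X, μ)` be a standard probability space with a pmp action of a
countable group `Γ`, and let `A`, `B` be measurable sets. Then `ν A = ν B` for
every `Γ`-invariant measure `ν ≪ μ` iff `A` and `B` are equidecomposable
modulo null sets: there are measurable sets `(f γ)_{γ ∈ Γ}`, pairwise disjoint
mod null with union `A` mod null, such that the sets `γ • f γ` are pairwise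
disjoint mod null with union `B` mod null. -/
theorem equidecomposable_iff_invariant_measures_agree {X : Type*}
    [MeasurableSpace X] [StandardBorelSpace X]
    {Γ : Type*} [Group Γ] [Countable Γ]
    (act : Γ → X → X) (hmeas : ∀ γ, Measurable (act γ))
    (hone : ∀ x, act 1 x = x)
    (hmul : ∀ γ δ x, act γ (act δ x) = act (γ * δ) x)
    (μ : Measure X) [IsProbabilityMeasure μ]
    (hpmp : ∀ γ, MeasurePreserving (act γ) μ μ)
    (A B : Set X) (hA : MeasurableSet A) (hB : MeasurableSet B) :
    (∀ ν : Measure X, ν ≪ μ →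
        (∀ (γ : Γ) (S : Set X), MeasurableSet S → ν (act γ ⁻¹' S) = ν S) →
        ν A = ν B) ↔
      ∃ f : Γ → Set X, (∀ γ, MeasurableSet (f γ)) ∧
        (Pairwise fun γ δ => μ (f γ ∩ f δ) = 0) ∧
        μ (symmDiff A (⋃ γ, f γ)) = 0 ∧
        (Pairwise fun γ δ => μ ((act γ '' f γ) ∩ (act δ '' f δ)) = 0) ∧
        μ (symmDiff B (⋃ γ, act γ '' f γ)) = 0 := by
  classical
  have hinv_one : ∀ (γ : Γ) (x : X), act γ⁻¹ (act γ x) = x := by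
    intro γ x; rw [hmul]; simp [hone]
  have hinv_one' : ∀ (γ : Γ) (x : X), act γ (act γ⁻¹ x) = x := by
    intro γ x; rw [hmul]; simp [hone]
  have himage : ∀ (γ : Γ) (S : Set X), act γ '' S = act γ⁻¹ ⁻¹' S := by
    intro γ S; ext x
    constructor
    · rintro ⟨y, hy, rfl⟩; rwa [Set.mem_preimage, hinv_one]
    · intro hx; exact ⟨act γ⁻¹ x, hx, hinv_one' γ x⟩
  have himg_meas : ∀ (γ : Γ) (S : Set X), MeasurableSet S → MeasurableSet (act γ '' S) := by
    intro γ S hS; rw [himage]; exact hmeas γ⁻¹ hS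
  have hpre_img : ∀ (γ : Γ) (S : Set X), act γ ⁻¹' (act γ '' S) = S := by
    intro γ S; rw [himage]; ext x; simp only [Set.mem_preimage]; rw [hinv_one]
  constructor
  · intro h
    have : Nonempty Γ := ⟨1⟩
    obtain ⟨g, hg⟩ := exists_surjective_nat Γ
    set F : ℕ → Set X := EquidecompAux.F act A B g with hFdef
    set A' : Set X := A \ ⋃ k, F k with hA'def
    set B' : Set X := B \ ⋃ k, act (g k) '' F k with hB'def
    have hFmeas : ∀ n, MeasurableSet (F n) :=
      EquidecompAux.measurable_F hmeas himg_meas hA hB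
    have hFA : ∀ n, F n ⊆ A := fun n => EquidecompAux.F_subset_A n
    have himgB : ∀ n, act (g n) '' F n ⊆ B := fun n => EquidecompAux.img_subset_B n
    have hFd : ∀ m n, m ≠ n → F m ∩ F n = ∅ := by
      intro m n hmn
      rcases lt_or_gt_of_ne hmn with hlt | hlt
      · exact EquidecompAux.F_disjoint hlt
      · rw [Set.inter_comm]; exact EquidecompAux.F_disjoint hlt
    have himgd : ∀ m n, m ≠ n → (act (g m) '' F m) ∩ (act (g n) '' F n) = ∅ := by
      intro m n hmn
      rcases lt_or_gt_of_ne hmn with hlt | hlt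
      · exact EquidecompAux.img_disjoint hlt
      · rw [Set.inter_comm]; exact EquidecompAux.img_disjoint hlt
    have hkey : ∀ (γ : Γ) (x : X), x ∈ A' → act γ x ∈ B' → False :=
      fun γ x hx hx' => EquidecompAux.key hg γ x hx hx'
    have hA'meas : MeasurableSet A' := hA.diff (MeasurableSet.iUnion hFmeas)
    have hB'meas : MeasurableSet B' :=
      hB.diff (MeasurableSet.iUnion fun n => himg_meas _ _ (hFmeas n))
    -- saturations
    have hsat_inv : ∀ (γ : Γ) (S : Set X),
        act γ ⁻¹' (⋃ δ : Γ, act δ '' S) = ⋃ δ : Γ, act δ '' S := by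
      intro γ S
      ext x
      simp only [Set.mem_preimage, Set.mem_iUnion, Set.mem_image]
      constructor
      · rintro ⟨δ, y, hy, hyx⟩
        exact ⟨γ⁻¹ * δ, y, hy, by rw [← hmul γ⁻¹ δ y, hyx, hinv_one]⟩
      · rintro ⟨δ, y, hy, rfl⟩
        exact ⟨γ * δ, y, hy, (hmul γ δ y).symm⟩
    have hsub_sat : ∀ S : Set X, S ⊆ ⋃ δ : Γ, act δ '' S := by
      intro S x hx
      exact Set.mem_iUnion.2 ⟨1, x, hx, hone x⟩
    -- main computation for restricted measures
    have main : ∀ C : Set X, MeasurableSet C → (∀ γ, act γ ⁻¹' C = C) →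
        μ (A' ∩ C) = μ (B' ∩ C) := by
      intro C hC hCinv
      set ν : Measure X := μ.restrict C with hν
      have hνac : ν ≪ μ := Measure.absolutelyContinuous_of_le Measure.restrict_le_self
      have hνinv : ∀ (γ : Γ) (S : Set X), MeasurableSet S → ν (act γ ⁻¹' S) = ν S := by
        intro γ S hS
        rw [hν, Measure.restrict_apply ((hmeas γ) hS), Measure.restrict_apply hS]
        conv_lhs => rw [← hCinv γ]
        rw [← Set.preimage_inter]
        exact (hpmp γ).measure_preimage (hS.inter hC).nullMeasurableSet
      have hAB := h ν hνac hνinv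
      have hFimg : ∀ n, ν (F n) = ν (act (g n) '' F n) := by
        intro n
        have := hνinv (g n) (act (g n) '' F n) (himg_meas _ _ (hFmeas n))
        rwa [hpre_img] at this
      have hsplitA : ν A = ν A' + ν (⋃ n, F n) := by
        have : A = A' ∪ ⋃ n, F n := by
          rw [hA'def, Set.diff_union_of_subset (Set.iUnion_subset hFA)]
        rw [this, measure_union (Set.disjoint_sdiff_left) (MeasurableSet.iUnion hFmeas)]
      have hsplitB : ν B = ν B' + ν (⋃ n, act (g n) '' F n) := by
        have : B = B' ∪ ⋃ n, act (g n) '' F n := by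
          rw [hB'def, Set.diff_union_of_subset (Set.iUnion_subset himgB)]
        rw [this, measure_union (Set.disjoint_sdiff_left)
          (MeasurableSet.iUnion fun n => himg_meas _ _ (hFmeas n))]
      have hUeq : ν (⋃ n, F n) = ν (⋃ n, act (g n) '' F n) := by
        rw [measure_iUnion (fun m n hmn => Set.disjoint_iff_inter_eq_empty.2 (hFd m n hmn))
            hFmeas,
          measure_iUnion (fun m n hmn => Set.disjoint_iff_inter_eq_empty.2 (himgd m n hmn))
            (fun n => himg_meas _ _ (hFmeas n))]
        exact tsum_congr hFimg
      have hfin : ν (⋃ n, F n) ≠ ⊤ := measure_ne_top ν _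
      have : ν A' = ν B' := by
        rw [hsplitA, hsplitB, hUeq] at hAB
        exact WithTop.add_right_cancel (by rw [← hUeq]; exact hfin) hAB
      rwa [hν, Measure.restrict_apply hA'meas, Measure.restrict_apply hB'meas] at this
    -- leftover sets are null
    have hμA' : μ A' = 0 := by
      have h1 := main (⋃ δ : Γ, act δ '' A')
        (MeasurableSet.iUnion fun δ => himg_meas _ _ hA'meas) (fun γ => hsat_inv γ A')
      have h2 : A' ∩ ⋃ δ : Γ, act δ '' A' = A' := Set.inter_eq_self_of_subset_left (hsub_sat A')
      have h3 : B' ∩ ⋃ δ : Γ, act δ '' A' = ∅ := by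
        ext x
        simp only [Set.mem_inter_iff, Set.mem_iUnion, Set.mem_image,
          Set.mem_empty_iff_false, iff_false, not_and]
        rintro hxB ⟨δ, y, hy, rfl⟩
        exact hkey δ y hy hxB
      rw [h2, h3, measure_empty] at h1
      exact h1
    have hμB' : μ B' = 0 := by
      have h1 := main (⋃ δ : Γ, act δ '' B')
        (MeasurableSet.iUnion fun δ => himg_meas _ _ hB'meas) (fun γ => hsat_inv γ B')
      have h2 : B' ∩ ⋃ δ : Γ, act δ '' B' = B' := Set.inter_eq_self_of_subset_left (hsub_sat B')
      have h3 : A' ∩ ⋃ δ : Γ, act δ '' B' = ∅ := by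
        ext x
        simp only [Set.mem_inter_iff, Set.mem_iUnion, Set.mem_image,
          Set.mem_empty_iff_false, iff_false, not_and]
        rintro hxA ⟨δ, y, hy, rfl⟩
        exact hkey δ⁻¹ (act δ y) hxA (by rw [hinv_one]; exact hy)
      rw [h2, h3, measure_empty] at h1
      exact h1.symm
    -- build the equidecomposition
    refine ⟨fun γ => ⋃ n, ⋃ _ : g n = γ, F n, ?_, ?_, ?_, ?_, ?_⟩
    · exact fun γ => MeasurableSet.iUnion fun n => MeasurableSet.iUnion fun _ => hFmeas n
    · intro γ δ hγδ
      have : (⋃ n, ⋃ _ : g n = γ, F n) ∩ (⋃ n, ⋃ _ : g n = δ, F n) = ∅ := by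
        ext x
        simp only [Set.mem_inter_iff, Set.mem_iUnion, Set.mem_empty_iff_false, iff_false,
          not_and]
        rintro ⟨n, rfl, hn⟩ ⟨m, hm, hmx⟩
        have hnm : n ≠ m := fun e => hγδ (e ▸ hm)
        have := hFd n m hnm
        exact absurd (Set.mem_inter hn hmx) (by rw [this]; exact Set.notMem_empty x)
      rw [this, measure_empty]
    · have hU : (⋃ γ : Γ, ⋃ n, ⋃ _ : g n = γ, F n) = ⋃ n, F n := by
        ext x
        simp only [Set.mem_iUnion]
        constructor
        · rintro ⟨γ, n, _, hx⟩; exact ⟨n, hx⟩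
        · rintro ⟨n, hx⟩; exact ⟨g n, n, rfl, hx⟩
      rw [hU, Set.symmDiff_def, Set.diff_eq_empty.2 (Set.iUnion_subset hFA),
        Set.union_empty]
      exact hμA'
    · intro γ δ hγδ
      have : (act γ '' ⋃ n, ⋃ _ : g n = γ, F n) ∩ (act δ '' ⋃ n, ⋃ _ : g n = δ, F n) = ∅ := by
        ext x
        simp only [Set.mem_inter_iff, Set.mem_image, Set.mem_iUnion,
          Set.mem_empty_iff_false, iff_false, not_and]
        rintro ⟨y, ⟨n, rfl, hy⟩, rfl⟩ ⟨z, ⟨m, hm, hz⟩, hzx⟩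
        have hnm : n ≠ m := fun e => hγδ (e ▸ hm)
        have := himgd n m hnm
        subst hm
        have hx1 : act (g n) y ∈ act (g n) '' F n := ⟨y, hy, rfl⟩
        have hx2 : act (g n) y ∈ act (g m) '' F m := ⟨z, hz, hzx⟩
        exact Set.eq_empty_iff_forall_notMem.1 this _ ⟨hx1, hx2⟩
      rw [this, measure_empty]
    · have hU : (⋃ γ : Γ, act γ '' ⋃ n, ⋃ _ : g n = γ, F n) = ⋃ n, act (g n) '' F n := by
        ext x
        simp only [Set.mem_iUnion, Set.mem_image]
        constructor
        · rintro ⟨γ, y, ⟨n, rfl, hy⟩, rfl⟩; exact ⟨n, y, hy, rfl⟩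
        · rintro ⟨n, y, hy, rfl⟩; exact ⟨g n, y, ⟨n, rfl, hy⟩, rfl⟩
      rw [hU, Set.symmDiff_def, Set.diff_eq_empty.2 (Set.iUnion_subset himgB),
        Set.union_empty]
      exact hμB'
  · rintro ⟨f, hfm, hfd, hfA, hfd', hfB⟩ ν hν hinv
    have himgm : ∀ γ, MeasurableSet (act γ '' f γ) := fun γ => himg_meas γ _ (hfm γ)
    have hνA : ν A = ν (⋃ γ, f γ) := by
      refine measure_congr ?_
      exact (MeasureTheory.measure_symmDiff_eq_zero_iff).1 (hν hfA)
    have hνB : ν B = ν (⋃ γ, act γ '' f γ) := by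
      refine measure_congr ?_
      exact (MeasureTheory.measure_symmDiff_eq_zero_iff).1 (hν hfB)
    have h1 : ν (⋃ γ, f γ) = ∑' γ, ν (f γ) :=
      measure_iUnion₀ (fun γ δ hγδ => hν (hfd hγδ)) (fun γ => (hfm γ).nullMeasurableSet)
    have h2 : ν (⋃ γ, act γ '' f γ) = ∑' γ, ν (act γ '' f γ) :=
      measure_iUnion₀ (fun γ δ hγδ => hν (hfd' hγδ)) (fun γ => (himgm γ).nullMeasurableSet)
    have h3 : ∀ γ, ν (f γ) = ν (act γ '' f γ) := by
      intro γ
      have := hinv γ (act γ '' f γ) (himgm γ)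
      rwa [hpre_img] at this
    rw [hνA, hνB, h1, h2]
    exact tsum_congr h3
end

section
/- Let (X, μ) be a standard probability space with an ergodic probability-measure-preserving action of a countable group Γ, and let A, B be measurable sets. Then A and B are equidecomposable (i.e., A = ⨆_γ A_γ and B = ⨆_γ γA_γ as countable disjoint unions in the measure algebra) if and only if μ(A) = μ(B). -/
open MeasureTheory Set

/-- Greedy pieces for the equidecomposition: at stage `n`, take all points of `A`
not yet used whose image under `act (e n)` lies in the part of `B` not yet covered. -/
def piece {X Γ : Type*} (act : Γ → X → X) (e : ℕ → Γ) (A B : Set X) : ℕ → Set X := fun n =>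
  (A \ ⋃ k : Fin n, piece act e A B k) ∩
    act (e n) ⁻¹' (B \ ⋃ k : Fin n, act (e k) '' (piece act e A B k))
termination_by n => n
decreasing_by all_goals exact k.isLt

section aux
variable {X Γ : Type*} (act : Γ → X → X) (e : ℕ → Γ) (A B : Set X)

lemma piece_def (n : ℕ) : piece act e A B n =
    (A \ ⋃ k : Fin n, piece act e A B k) ∩
      act (e n) ⁻¹' (B \ ⋃ k : Fin n, act (e k) '' (piece act e A B k)) := by
  rw [piece]

lemma piece_subset (n : ℕ) : piece act e A B n ⊆ A := by
  rw [piece_def]; exact fun x hx => hx.1.1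

lemma image_piece_subset (n : ℕ) :
    act (e n) '' piece act e A B n ⊆ B \ ⋃ k : Fin n, act (e k) '' (piece act e A B k) := by
  conv_lhs => rw [piece_def]
  rintro y ⟨x, hx, rfl⟩
  exact hx.2

lemma piece_pairwise_disjoint : Pairwise (Function.onFun Disjoint (piece act e A B)) := by
  have key : ∀ m n, m < n → Disjoint (piece act e A B m) (piece act e A B n) := by
    intro m n h
    refine Set.disjoint_left.2 fun x hxm hxn => ?_
    rw [piece_def] at hxn
    exact hxn.1.2 (Set.mem_iUnion.2 ⟨⟨m, h⟩, hxm⟩)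
  intro m n hmn
  rcases hmn.lt_or_gt with h | h
  · exact key m n h
  · exact (key n m h).symm

lemma image_piece_pairwise_disjoint :
    Pairwise (Function.onFun Disjoint (fun n => act (e n) '' piece act e A B n)) := by
  have key : ∀ m n, m < n →
      Disjoint (act (e m) '' piece act e A B m) (act (e n) '' piece act e A B n) := by
    intro m n h
    refine Set.disjoint_left.2 fun y hym hyn => ?_
    exact (image_piece_subset act e A B n hyn).2 (Set.mem_iUnion.2 ⟨⟨m, h⟩, hym⟩)
  intro m n hmn
  rcases hmn.lt_or_gt with h | h
  · exact key m n h
  · exact (key n m h).symm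

end aux

/-- Let `(X, μ)` be a standard probability space with an ergodic pmp action of
a countable group `Γ`, and let `A`, `B` be measurable sets. Then `A` and `B`
are equidecomposable (mod null sets, in the measure algebra) iff
`μ A = μ B`. -/
theorem ergodic_equidecomposable_iff_measure_eq {X : Type*}
    [MeasurableSpace X] [StandardBorelSpace X]
    {Γ : Type*} [Group Γ] [Countable Γ]
    (act : Γ → X → X) (hmeas : ∀ γ, Measurable (act γ))
    (hone : ∀ x, act 1 x = x)
    (hmul : ∀ γ δ x, act γ (act δ x) = act (γ * δ) x)
    (μ : Measure X) [IsProbabilityMeasure μ]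
    (hpmp : ∀ γ, MeasurePreserving (act γ) μ μ)
    (hergodic : ∀ S : Set X, MeasurableSet S → (∀ γ, act γ ⁻¹' S = S) →
      μ S = 0 ∨ μ S = 1)
    (A B : Set X) (hA : MeasurableSet A) (hB : MeasurableSet B) :
    (∃ f : Γ → Set X, (∀ γ, MeasurableSet (f γ)) ∧
        (Pairwise fun γ δ => μ (f γ ∩ f δ) = 0) ∧
        μ (symmDiff A (⋃ γ, f γ)) = 0 ∧
        (Pairwise fun γ δ => μ ((act γ '' f γ) ∩ (act δ '' f δ)) = 0) ∧
        μ (symmDiff B (⋃ γ, act γ '' f γ)) = 0) ↔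
      μ A = μ B := by
  -- basic facts about the action
  have himg_eq_pre : ∀ (γ : Γ) (S : Set X), act γ '' S = act γ⁻¹ ⁻¹' S := by
    intro γ S
    ext x
    simp only [mem_image, mem_preimage]
    constructor
    · rintro ⟨s, hs, rfl⟩
      rwa [hmul, inv_mul_cancel, hone]
    · intro h
      exact ⟨act γ⁻¹ x, h, by rw [hmul, mul_inv_cancel, hone]⟩
  have hmeasimg : ∀ (γ : Γ) (S : Set X), MeasurableSet S → MeasurableSet (act γ '' S) := by
    intro γ S hS
    rw [himg_eq_pre]
    exact (hmeas _) hS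
  have hμimg : ∀ (γ : Γ) (S : Set X), MeasurableSet S → μ (act γ '' S) = μ S := by
    intro γ S hS
    rw [himg_eq_pre]
    exact (hpmp γ⁻¹).measure_preimage hS.nullMeasurableSet
  constructor
  · -- easy direction
    rintro ⟨f, hfm, hfd, hfA, hfdi, hfB⟩
    have h1 : μ A = μ (⋃ γ, f γ) :=
      measure_congr (measure_symmDiff_eq_zero_iff.mp hfA)
    have h2 : μ B = μ (⋃ γ, act γ '' f γ) :=
      measure_congr (measure_symmDiff_eq_zero_iff.mp hfB)
    rw [h1, h2, measure_iUnion₀ hfd (fun γ => (hfm γ).nullMeasurableSet),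
      measure_iUnion₀ hfdi (fun γ => (hmeasimg γ _ (hfm γ)).nullMeasurableSet)]
    exact tsum_congr fun γ => (hμimg γ _ (hfm γ)).symm
  · -- hard direction
    intro hAB
    obtain ⟨e, he⟩ := exists_surjective_nat Γ
    set g : ℕ → Set X := piece act e A B with hg
    have hgdef : ∀ n, g n = (A \ ⋃ k : Fin n, g k) ∩
        act (e n) ⁻¹' (B \ ⋃ k : Fin n, act (e k) '' g k) := fun n => piece_def act e A B n
    have hgA : ∀ n, g n ⊆ A := piece_subset act e A B
    have hgB : ∀ n, act (e n) '' g n ⊆ B := fun n hy =>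
      fun h => (image_piece_subset act e A B n h).1
    have hpwd : Pairwise (Function.onFun Disjoint g) := piece_pairwise_disjoint act e A B
    have himgpwd : Pairwise (Function.onFun Disjoint (fun n => act (e n) '' g n)) :=
      image_piece_pairwise_disjoint act e A B
    -- measurability of the pieces
    have hmeasg : ∀ n, MeasurableSet (g n) := by
      intro n
      induction n using Nat.strong_induction_on with
      | _ n ih =>
        rw [hgdef]
        exact (hA.diff (MeasurableSet.iUnion fun (k : Fin n) => ih k.1 k.isLt)).inter
          ((hmeas _) (hB.diff (MeasurableSet.iUnion fun (k : Fin n) =>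
            hmeasimg _ _ (ih k.1 k.isLt))))
    set U : Set X := ⋃ n, g n with hU
    set V : Set X := ⋃ n, act (e n) '' g n with hV
    have hUm : MeasurableSet U := MeasurableSet.iUnion hmeasg
    have hVm : MeasurableSet V := MeasurableSet.iUnion fun n => hmeasimg _ _ (hmeasg n)
    have hUA : U ⊆ A := iUnion_subset hgA
    have hVB : V ⊆ B := iUnion_subset hgB
    set A' : Set X := A \ U with hA'
    set B' : Set X := B \ V with hB'
    have hA'm : MeasurableSet A' := hA.diff hUm
    have hB'm : MeasurableSet B' := hB.diff hVm
    -- maximality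
    have hmax : ∀ γ : Γ, A' ∩ act γ ⁻¹' B' = ∅ := by
      intro γ
      rw [eq_empty_iff_forall_notMem]
      rintro x ⟨hxA', hxB'⟩
      obtain ⟨n, rfl⟩ := he γ
      have hx : x ∈ g n := by
        rw [hgdef n]
        constructor
        · exact ⟨hxA'.1, fun h => hxA'.2
            (iUnion_subset (fun (k : Fin n) => subset_iUnion g k.1) h)⟩
        · exact ⟨hxB'.1, fun h => hxB'.2
            (iUnion_subset (fun (k : Fin n) =>
              subset_iUnion (fun m => act (e m) '' g m) k.1) h)⟩
      exact hxA'.2 (mem_iUnion.2 ⟨n, hx⟩)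
    -- equal measures of the remainders
    have hμUV : μ U = μ V := by
      rw [hU, hV, measure_iUnion hpwd hmeasg,
        measure_iUnion himgpwd (fun n => hmeasimg _ _ (hmeasg n))]
      exact tsum_congr fun n => (hμimg _ _ (hmeasg n)).symm
    have hμA'B' : μ A' = μ B' := by
      rw [hA', hB', measure_diff hUA hUm.nullMeasurableSet (measure_ne_top μ U),
        measure_diff hVB hVm.nullMeasurableSet (measure_ne_top μ V), hAB, hμUV]
    -- ergodicity kills the remainders
    set S : Set X := ⋃ γ, act γ ⁻¹' B' with hS
    have hSm : MeasurableSet S := MeasurableSet.iUnion fun γ => (hmeas γ) hB'm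
    have hSinv : ∀ δ, act δ ⁻¹' S = S := by
      intro δ
      rw [hS, preimage_iUnion]
      have h1 : ∀ γ : Γ, act δ ⁻¹' (act γ ⁻¹' B') = act (γ * δ) ⁻¹' B' := by
        intro γ
        rw [preimage_preimage]
        simp only [hmul]
      simp only [h1]
      apply subset_antisymm
      · exact iUnion_subset fun γ => subset_iUnion (fun γ => act γ ⁻¹' B') (γ * δ)
      · refine iUnion_subset fun γ => subset_iUnion_of_subset (γ * δ⁻¹) ?_
        rw [inv_mul_cancel_right]
    have hB'S : B' ⊆ S := by
      intro x hx
      exact mem_iUnion.2 ⟨1, by simpa [mem_preimage, hone] using hx⟩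
    have hA'S : A' ⊆ Sᶜ := by
      intro x hxA' hxS
      obtain ⟨γ, hγ⟩ := mem_iUnion.mp hxS
      have h0 := hmax γ
      rw [eq_empty_iff_forall_notMem] at h0
      exact h0 x ⟨hxA', hγ⟩
    have hB'0 : μ B' = 0 := by
      by_contra h
      rcases hergodic S hSm hSinv with h0 | h1
      · exact h (measure_mono_null hB'S h0)
      · have hc : μ Sᶜ = 0 := by
          rw [measure_compl hSm (measure_ne_top μ S), h1, measure_univ, tsub_self]
        exact h (hμA'B' ▸ measure_mono_null hA'S hc)
    have hA'0 : μ A' = 0 := hμA'B'.trans hB'0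
    -- assemble the decomposition
    refine ⟨fun γ => ⋃ n : {n : ℕ // e n = γ}, g n, ?_, ?_, ?_, ?_, ?_⟩
    · exact fun γ => MeasurableSet.iUnion fun n => hmeasg n
    · intro γ δ hγδ
      have : (⋃ n : {n : ℕ // e n = γ}, g n) ∩ (⋃ n : {n : ℕ // e n = δ}, g n) = ∅ := by
        rw [eq_empty_iff_forall_notMem]
        rintro x ⟨hx1, hx2⟩
        obtain ⟨⟨n, hn⟩, hxn⟩ := mem_iUnion.mp hx1
        obtain ⟨⟨m, hm⟩, hxm⟩ := mem_iUnion.mp hx2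
        have hnm : n ≠ m := fun h => hγδ (hn ▸ hm ▸ h ▸ rfl)
        exact Set.disjoint_left.mp (hpwd hnm) hxn hxm
      rw [this, measure_empty]
    · have hUf : (⋃ γ, ⋃ n : {n : ℕ // e n = γ}, g n) = U := by
        apply subset_antisymm
        · exact iUnion_subset fun γ => iUnion_subset fun n => subset_iUnion g n.1
        · exact iUnion_subset fun n =>
            subset_iUnion_of_subset (e n)
              (subset_iUnion (fun m : {m : ℕ // e m = e n} => g m) ⟨n, rfl⟩)
      rw [hUf, Set.symmDiff_def]
      apply measure_union_null
      · exact hA'0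
      · exact measure_mono_null (fun x hx => (hx.2 (hUA hx.1)).elim) hA'0
    · have himgf : ∀ γ : Γ, act γ '' (⋃ n : {n : ℕ // e n = γ}, g n) =
          ⋃ n : {n : ℕ // e n = γ}, act (e n) '' g n := by
        intro γ
        rw [image_iUnion]
        exact iUnion_congr fun n => by rw [n.2]
      intro γ δ hγδ
      rw [himgf, himgf]
      have : (⋃ n : {n : ℕ // e n = γ}, act (e n) '' g n) ∩
          (⋃ n : {n : ℕ // e n = δ}, act (e n) '' g n) = ∅ := by
        rw [eq_empty_iff_forall_notMem]
        rintro x ⟨hx1, hx2⟩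
        obtain ⟨⟨n, hn⟩, hxn⟩ := mem_iUnion.mp hx1
        obtain ⟨⟨m, hm⟩, hxm⟩ := mem_iUnion.mp hx2
        have hnm : n ≠ m := fun h => hγδ (hn ▸ hm ▸ h ▸ rfl)
        exact Set.disjoint_left.mp (himgpwd hnm) hxn hxm
      rw [this, measure_empty]
    · have himgf : ∀ γ : Γ, act γ '' (⋃ n : {n : ℕ // e n = γ}, g n) =
          ⋃ n : {n : ℕ // e n = γ}, act (e n) '' g n := by
        intro γ
        rw [image_iUnion]
        exact iUnion_congr fun n => by rw [n.2]
      have hVf : (⋃ γ, act γ '' (⋃ n : {n : ℕ // e n = γ}, g n)) = V := by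
        simp only [himgf]
        apply subset_antisymm
        · exact iUnion_subset fun γ => iUnion_subset fun n =>
            subset_iUnion (fun m => act (e m) '' g m) n.1
        · exact iUnion_subset fun n =>
            subset_iUnion_of_subset (e n)
              (subset_iUnion (fun m : {m : ℕ // e m = e n} => act (e m) '' g m) ⟨n, rfl⟩)
      rw [hVf, Set.symmDiff_def]
      apply measure_union_null
      · exact hB'0
      · exact measure_mono_null (fun x hx => (hx.2 (hVB hx.1)).elim) hB'0
end

section
/- For a finite von Neumann algebra M, the generalized cardinal algebra P(M)/∼_MvN of projections modulo Murray–von Neumann equivalence (with addition induced by join of orthogonal projections) is cancellative: if [p] + [q] = [p] then [q] = 0. -/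
open scoped ENNReal

variable {H : Type*} [NormedAddCommGroup H] [InnerProductSpace ℂ H] [CompleteSpace H]

/-- `p` is a projection belonging to the von Neumann algebra `M`. -/
def VonNeumannAlgebra.IsProjIn (M : VonNeumannAlgebra H) (p : H →L[ℂ] H) : Prop :=
  p ∈ M ∧ IsSelfAdjoint p ∧ p * p = p

/-- Murray–von Neumann equivalence of `p` and `q` relative to `M`:
`p = u u*` and `q = u* u` for some `u ∈ M`. -/
def VonNeumannAlgebra.MvN (M : VonNeumannAlgebra H) (p q : H →L[ℂ] H) : Prop :=
  ∃ u ∈ M, u * star u = p ∧ star u * u = q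

/-- The subprojection order: `p ≤ q` (for projections, `q p = p`). -/
def VonNeumannAlgebra.SubProj (p q : H →L[ℂ] H) : Prop :=
  q * p = p

/-- `M` is a finite von Neumann algebra: `p ∼ p' ≤ p` implies `p' = p`. -/
def VonNeumannAlgebra.IsFiniteVNA (M : VonNeumannAlgebra H) : Prop :=
  ∀ p p' : H →L[ℂ] H, M.IsProjIn p → M.IsProjIn p' → M.MvN p p' →
    VonNeumannAlgebra.SubProj p' p → p' = p

/-- For a finite von Neumann algebra `M`, the GCA `P(M)/∼` of projections
modulo Murray–von Neumann equivalence (with addition induced by join, i.e.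
sum, of orthogonal projections) is cancellative: if `[p] + [q] = [p]` then
`[q] = 0`. -/
theorem VonNeumannAlgebra.projGCA_cancellative (M : VonNeumannAlgebra H)
    (hfin : M.IsFiniteVNA) (p q : H →L[ℂ] H)
    (hp : M.IsProjIn p) (hq : M.IsProjIn q)
    -- `[p] + [q] = [p]`: there are orthogonal representatives `p' ∼ p`,
    -- `q' ∼ q` whose join `p' + q'` is Murray–von Neumann equivalent to `p`
    (h : ∃ p' q' : H →L[ℂ] H, M.IsProjIn p' ∧ M.IsProjIn q' ∧
      M.MvN p' p ∧ M.MvN q' q ∧ p' * q' = 0 ∧ M.MvN (p' + q') p) :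
    q = 0 := by
  obtain ⟨p', q', hp', hq', hpp, hqq, horth, hsum⟩ := h
  have horth' : q' * p' = 0 := by
    have := congrArg star horth
    rwa [star_mul, hp'.2.1.star_eq, hq'.2.1.star_eq, star_zero] at this
  have hpq : M.IsProjIn (p' + q') := by
    refine ⟨add_mem hp'.1 hq'.1, hp'.2.1.add hq'.2.1, ?_⟩
    calc (p' + q') * (p' + q') = p' * p' + p' * q' + (q' * p' + q' * q') := by noncomm_ring
      _ = p' + q' := by rw [hp'.2.2, hq'.2.2, horth, horth']; abel
  -- symmetry of MvN
  have symm : ∀ a b : H →L[ℂ] H, M.MvN a b → M.MvN b a := by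
    rintro a b ⟨u, hu, h1, h2⟩
    exact ⟨star u, star_mem hu, by rwa [star_star], by rwa [star_star]⟩
  -- transitivity of MvN between projections
  have trans : ∀ a b c : H →L[ℂ] H, a * a = a → c * c = c →
      M.MvN a b → M.MvN b c → M.MvN a c := by
    rintro a b c ha hc ⟨u, hu, hu1, hu2⟩ ⟨v, hv, hv1, hv2⟩
    refine ⟨u * v, mul_mem hu hv, ?_, ?_⟩
    · calc u * v * star (u * v) = u * (v * star v) * star u := by
            rw [star_mul]; noncomm_ring
        _ = (u * star u) * (u * star u) := by rw [hv1, ← hu2]; noncomm_ring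
        _ = a := by rw [hu1, ha]
    · calc star (u * v) * (u * v) = star v * (star u * u) * v := by
            rw [star_mul]; noncomm_ring
        _ = (star v * v) * (star v * v) := by rw [hu2, ← hv1]; noncomm_ring
        _ = c := by rw [hv2, hc]
  -- (p' + q') ~ p', with p' ≤ p' + q'
  have hmvn : M.MvN (p' + q') p' :=
    trans _ _ _ hpq.2.2 hp'.2.2 hsum (symm _ _ hpp)
  have hsub : VonNeumannAlgebra.SubProj p' (p' + q') := by
    show (p' + q') * p' = p'
    rw [add_mul, hp'.2.2, horth', add_zero]
  have heq : p' = p' + q' := hfin _ _ hpq hp' hmvn hsub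
  have hq'0 : q' = 0 := by
    have := heq.symm
    rwa [add_eq_left] at this
  obtain ⟨u, hu, hu1, hu2⟩ := hqq
  rw [hq'0] at hu1
  have hu0 : u = 0 := (CStarRing.mul_star_self_eq_zero_iff u).mp hu1
  rw [← hu2, hu0]
  simp
end
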